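/- arXiv:1809.09084 — 6 statements merged into one kernel-verified Lean document; each statement's English description precedes it below -/
import Mathlib

section
/- For α = −1, the group O₂(−1) is not isomorphic to O(2): there exists no group isomorphism between O₂(−1) and the group of ℝ-linear isometric automorphisms of ℂ (equivalently, the group of 2×2 real orthogonal matrices). -/
set_option linter.unnecessarySeqFocus false

open Complex

/-- Complex conjugation as a group endomorphism of the circle group. -/
noncomputable def conjC : Circle →* Circle where
  toFun z := ⟨(starRingEnd ℂ) (z : ℂ), by
    simp only [Submonoid.unitSphere, Metric.mem_sphere, dist_zero_right]
    simp [Circle.norm_coe]⟩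
  map_one' := by ext; simp
  map_mul' a b := by ext; simp; rfl

@[simp] lemma conjC_coe (z : Circle) : (conjC z : ℂ) = (starRingEnd ℂ) (z : ℂ) := rfl

@[simp] lemma conjC_conjC (z : Circle) : conjC (conjC z) = z := by
  ext; simp

/-- The element `-1` of the circle group. -/
noncomputable def negOneC : Circle := ⟨-1, by
  simp only [Submonoid.unitSphere, Metric.mem_sphere, dist_zero_right]
  simp⟩

@[simp] lemma negOneC_coe : (negOneC : ℂ) = -1 := rfl

/-- The sign `α = ±1` as an element of the circle group. -/
noncomputable def sgnC (α : ℤˣ) : Circle := if α = 1 then 1 else negOneC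

/-- The underlying type of a twisted extension of `ℤ₂ = {0̂, 1̂}` by a commutative group `A`,
with twisting endomorphism `τ` and cocycle value `a₀`.  An element `⟨z, t⟩` stands for the
pair `(z, t)`.  The group `O₂(α)` of the paper is the case `A = Circle`, `τ` = complex
conjugation, `a₀ = α = ±1`. -/
@[ext]
structure Tw (A : Type*) [CommGroup A] (τ : A →* A) (a₀ : A) where
  z : A
  t : ZMod 2

namespace Tw

variable {A : Type*} [CommGroup A] {τ : A →* A} {a₀ : A}

/-- The multiplication `(z₁,0̂)(z₂,t) = (z₁z₂, t)`, `(z₁,1̂)(z₂,0̂) = (z₁·τ(z₂), 1̂)`,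
`(z₁,1̂)(z₂,1̂) = (a₀·z₁·τ(z₂), 0̂)`. -/
instance : Mul (Tw A τ a₀) :=
  ⟨fun g h => ⟨(if g.t = 1 ∧ h.t = 1 then a₀ else 1) * g.z * (if g.t = 1 then τ h.z else h.z),
    g.t + h.t⟩⟩

/-- The unit `(1, 0̂)`. -/
instance : One (Tw A τ a₀) := ⟨⟨1, 0⟩⟩

instance : Inv (Tw A τ a₀) := ⟨fun g => ⟨if g.t = 1 then a₀⁻¹ * τ g.z⁻¹ else g.z⁻¹, g.t⟩⟩

@[simp] lemma mul_z (g h : Tw A τ a₀) :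
    (g * h).z = (if g.t = 1 ∧ h.t = 1 then a₀ else 1) * g.z * (if g.t = 1 then τ h.z else h.z) :=
  rfl

@[simp] lemma mul_t (g h : Tw A τ a₀) : (g * h).t = g.t + h.t := rfl

@[simp] lemma one_z : (1 : Tw A τ a₀).z = 1 := rfl
@[simp] lemma one_t : (1 : Tw A τ a₀).t = 0 := rfl

@[simp] lemma inv_z (g : Tw A τ a₀) :
    (g⁻¹).z = if g.t = 1 then a₀⁻¹ * τ g.z⁻¹ else g.z⁻¹ := rfl
@[simp] lemma inv_t (g : Tw A τ a₀) : (g⁻¹).t = g.t := rfl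

lemma zmod2_cases : ∀ t : ZMod 2, t = 0 ∨ t = 1 := by decide

instance group [Fact (∀ a : A, τ (τ a) = a)] [Fact (τ a₀ = a₀)] : Group (Tw A τ a₀) := by
  have hττ := Fact.out (p := ∀ a : A, τ (τ a) = a)
  have hτa := Fact.out (p := τ a₀ = a₀)
  refine Group.ofLeftAxioms ?_ ?_ ?_
  · rintro ⟨z₁, t₁⟩ ⟨z₂, t₂⟩ ⟨z₃, t₃⟩
    rcases zmod2_cases t₁ with rfl | rfl <;> rcases zmod2_cases t₂ with rfl | rfl <;>
      rcases zmod2_cases t₃ with rfl | rfl <;> ext <;>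
      simp [hττ, hτa, map_mul, mul_comm, mul_assoc, mul_left_comm] <;> decide
  · rintro ⟨z, t⟩
    ext <;> simp
  · rintro ⟨z, t⟩
    rcases zmod2_cases t with rfl | rfl <;> ext <;>
      simp [hττ, hτa, map_mul, mul_comm, mul_assoc, mul_left_comm] <;> decide

end Tw

instance : Fact (∀ a : Circle, conjC (conjC a) = a) := ⟨conjC_conjC⟩

instance (α : ℤˣ) : Fact (conjC (sgnC α) = sgnC α) := ⟨by
  rcases Int.units_eq_one_or α with rfl | rfl <;> ext <;> simp [sgnC, negOneC_coe]⟩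

/-- The group `O₂(α)` for a sign `α ∈ {−1, 1}`: underlying set `Circle × ℤ₂` with the
twisted multiplication `(z₁,0̂)(z₂,t) = (z₁z₂,t)`, `(z₁,1̂)(z₂,0̂) = (z₁·conj(z₂),1̂)`,
`(z₁,1̂)(z₂,1̂) = (α·z₁·conj(z₂),0̂)` and unit `(1,0̂)`. -/
abbrev O2 (α : ℤˣ) : Type := Tw Circle conjC (sgnC α)

/-! The sign `α` is the square of every reflection `(z, 1̂)` of `O₂(α)`. For `α = −1` the
reflections therefore have order 4, and the only involution of `O₂(−1)` is the rotation
`(−1, 0̂)`, whereas `O(2)` contains the two distinct involutions `z ↦ conj z` and `z ↦ −z`. -/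

lemma conjC_eq_inv (z : Circle) : conjC z = z⁻¹ :=
  Circle.ext (Circle.coe_inv_eq_conj z).symm

lemma Circle.mul_self_eq_one_iff {z : Circle} : z * z = 1 ↔ z = 1 ∨ z = negOneC := by
  simp only [← Circle.coe_inj, Circle.coe_mul, Circle.coe_one, negOneC_coe,
    _root_.mul_self_eq_one_iff]

namespace O2

lemma mul_self_of_t_eq_one {α : ℤˣ} (x : O2 α) (hx : x.t = 1) : x * x = ⟨sgnC α, 0⟩ := by
  ext
  · simp [hx, conjC_eq_inv]
  · simp only [Tw.mul_t, hx]
    decide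

lemma subsingleton_orderOf_eq_two_neg_one : {x : O2 (-1) | orderOf x = 2}.Subsingleton := by
  suffices h : ∀ x : O2 (-1), orderOf x = 2 → x = ⟨negOneC, 0⟩ from
    fun x hx y hy => (h x hx).trans (h y hy).symm
  intro x hx
  obtain ⟨hsq, hne⟩ := orderOf_eq_prime_iff.mp hx
  rw [sq] at hsq
  obtain ⟨z, t⟩ := x
  rcases Tw.zmod2_cases t with rfl | rfl
  · have hz : z * z = 1 := by simpa using congrArg Tw.z hsq
    rcases Circle.mul_self_eq_one_iff.mp hz with rfl | rfl
    · exact absurd rfl hne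
    · rfl
  · rw [mul_self_of_t_eq_one _ rfl] at hsq
    have : (negOneC : ℂ) = 1 := by simpa [sgnC] using congrArg (fun x => (x.z : ℂ)) hsq
    norm_num at this

end O2

lemma Complex.nontrivial_orderOf_eq_two_linearIsometryEquiv :
    {f : ℂ ≃ₗᵢ[ℝ] ℂ | orderOf f = 2}.Nontrivial := by
  refine ⟨Complex.conjLIE, ?_, LinearIsometryEquiv.neg ℝ, ?_, fun h => ?_⟩
  · refine orderOf_eq_prime (by ext; simp [sq]) fun h => ?_
    have := congrArg (· Complex.I) h
    norm_num [Complex.ext_iff] at this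
  · refine orderOf_eq_prime (by ext; simp [sq]) fun h => ?_
    have := congrArg (· (1 : ℂ)) h
    norm_num at this
  · have := congrArg (· (1 : ℂ)) h
    norm_num at this

lemma MulEquiv.subsingleton_orderOf_eq {G H : Type*} [Monoid G] [Monoid H] (e : G ≃* H) {n : ℕ}
    (hG : {x : G | orderOf x = n}.Subsingleton) : {y : H | orderOf y = n}.Subsingleton :=
  fun y₁ h₁ y₂ h₂ => e.symm.injective <|
    hG (by simpa [e.symm.orderOf_eq] using h₁) (by simpa [e.symm.orderOf_eq] using h₂)

/-- For `α = −1`, the group `O₂(−1)` is not isomorphic to `O(2)`, the group of ℝ-linear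
isometric automorphisms of `ℂ`. -/
theorem O2_neg_not_iso_orthogonalGroup :
    IsEmpty (O2 (-1) ≃* (ℂ ≃ₗᵢ[ℝ] ℂ)) :=
  ⟨fun e => Complex.nontrivial_orderOf_eq_two_linearIsometryEquiv.not_subsingleton
    (e.subsingleton_orderOf_eq O2.subsingleton_orderOf_eq_two_neg_one)⟩
end

section
/- Let G be a group and ε ∈ G a central element with ε² = 1. Let H = Circle ⋊ ℤ₂ be the semidirect product in which the nontrivial element of ℤ₂ acts on the circle group by complex conjugation. Let N be the subgroup of G × H generated by (ε, (−1, 0̂)) and N_c the subgroup of G × Circle generated by (ε, −1); both generators are central of order dividing 2, so N and N_c are normal of order at most 2. Then there is a group isomorphism (G × H)/N ≅ ((G × Circle)/N_c) ⋊_ξ ℤ₂, where ξ sends the nontrivial element of ℤ₂ to the automorphism of (G × Circle)/N_c induced by (g, z) ↦ (g, conj(z)). (For G = Spin(V,h) and ε = −1 this is the statement Spin^o₊(V,h) ≅ Spin^c(V,h) ⋊ ℤ₂.) -/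
open Complex

/-!
The map `(g, (z, k)) ↦ ([g, z], k)` is a surjective homomorphism
`G × (C ⋊ K) → ((G × C)/Nc) ⋊ K` as soon as the action on the quotient is induced by the action
on `C`, and its kernel is `Nc`, viewed inside `G × C ≤ G × (C ⋊ K)`. The theorem is the first
isomorphism theorem for it, since the image of `Nc = ⟨(ε, -1)⟩` there is `N = ⟨(ε, (-1, 0̂))⟩`.
-/

namespace SemidirectProduct

variable {G C K : Type*} [Group G] [Group C] [Group K] {act : K →* MulAut C}
  {Nc : Subgroup (G × C)} [Nc.Normal] {ξ : K →* MulAut ((G × C) ⧸ Nc)}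

abbrev prodInl : G × C →* G × (C ⋊[act] K) :=
  (MonoidHom.id G).prodMap inl

def prodToQuotient
    (hξ : ∀ k g z, ξ k (QuotientGroup.mk (g, z)) = QuotientGroup.mk (g, act k z)) :
    G × (C ⋊[act] K) →* ((G × C) ⧸ Nc) ⋊[ξ] K where
  toFun p := ⟨QuotientGroup.mk (p.1, p.2.left), p.2.right⟩
  map_one' := rfl
  map_mul' p q := by
    refine SemidirectProduct.ext ?_ rfl
    change QuotientGroup.mk ((p.1 * q.1, p.2.left * act p.2.right q.2.left) : G × C) =
      QuotientGroup.mk ((p.1, p.2.left) : G × C) * ξ p.2.right (QuotientGroup.mk (q.1, q.2.left))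
    rw [hξ]
    rfl

theorem prodToQuotient_surjective
    (hξ : ∀ k g z, ξ k (QuotientGroup.mk (g, z)) = QuotientGroup.mk (g, act k z)) :
    Function.Surjective (prodToQuotient hξ) := by
  rintro ⟨x, k⟩
  obtain ⟨⟨g, z⟩, rfl⟩ := QuotientGroup.mk_surjective x
  exact ⟨(g, ⟨z, k⟩), rfl⟩

theorem ker_prodToQuotient
    (hξ : ∀ k g z, ξ k (QuotientGroup.mk (g, z)) = QuotientGroup.mk (g, act k z)) :
    (prodToQuotient hξ).ker = Nc.map prodInl := by
  ext ⟨g, z, k⟩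
  simp only [MonoidHom.mem_ker, Subgroup.mem_map, Prod.exists]
  constructor
  · intro h
    have hk : k = 1 := congrArg SemidirectProduct.right h
    have hgz : (g, z) ∈ Nc := (QuotientGroup.eq_one_iff _).1 (congrArg SemidirectProduct.left h)
    subst hk
    exact ⟨g, z, hgz, rfl⟩
  · rintro ⟨g', z', hgz, h⟩
    obtain ⟨rfl, h⟩ := Prod.ext_iff.1 h
    obtain ⟨rfl, rfl⟩ := SemidirectProduct.ext_iff.1 h
    exact SemidirectProduct.ext ((QuotientGroup.eq_one_iff _).2 hgz) rfl

noncomputable def prodQuotientEquiv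
    (hξ : ∀ k g z, ξ k (QuotientGroup.mk (g, z)) = QuotientGroup.mk (g, act k z))
    {N : Subgroup (G × (C ⋊[act] K))} [N.Normal] (hN : Nc.map prodInl = N) :
    (G × (C ⋊[act] K)) ⧸ N ≃* ((G × C) ⧸ Nc) ⋊[ξ] K :=
  (QuotientGroup.quotientMulEquivOfEq (hN.symm.trans (ker_prodToQuotient hξ).symm)).trans
    (QuotientGroup.quotientKerEquivOfSurjective _ (prodToQuotient_surjective hξ))

end SemidirectProduct

theorem spino_plus_iso_spinc_rtimes_z2_general {G : Type*} [Group G]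
    (ε : G)
    (act : Multiplicative (ZMod 2) →* MulAut Circle)
    (hact : ∀ z : Circle, act (Multiplicative.ofAdd 1) z = conjC z)
    (N : Subgroup (G × (Circle ⋊[act] Multiplicative (ZMod 2)))) [N.Normal]
    (hN : N = Subgroup.zpowers (ε, ⟨negOneC, 1⟩))
    (Nc : Subgroup (G × Circle)) [Nc.Normal]
    (hNc : Nc = Subgroup.zpowers (ε, negOneC))
    (ξ : Multiplicative (ZMod 2) →* MulAut ((G × Circle) ⧸ Nc))
    (hξ : ∀ (g : G) (z : Circle),
      ξ (Multiplicative.ofAdd 1) (QuotientGroup.mk (g, z)) =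
        QuotientGroup.mk (g, conjC z)) :
    Nonempty ((G × (Circle ⋊[act] Multiplicative (ZMod 2))) ⧸ N ≃*
      (((G × Circle) ⧸ Nc) ⋊[ξ] Multiplicative (ZMod 2))) := by
  have hξ_act : ∀ k g z, ξ k (QuotientGroup.mk (g, z)) = QuotientGroup.mk (g, act k z) := by
    intro k g z
    obtain rfl | rfl : k = 1 ∨ k = Multiplicative.ofAdd 1 := by revert k; decide
    · simp
    · rw [hξ, hact]
  have hN_map : Nc.map SemidirectProduct.prodInl = N := by
    rw [hNc, hN, MonoidHom.map_zpowers]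
    rfl
  exact ⟨SemidirectProduct.prodQuotientEquiv hξ_act hN_map⟩

/-- Let `G` be a group, `ε ∈ G` a central element with `ε² = 1`, and
`H = Circle ⋊ ℤ₂` the semidirect product where the nontrivial element of `ℤ₂` acts by
complex conjugation.  Let `N ≤ G × H` be generated by `(ε, (−1, 0̂))` and
`Nc ≤ G × Circle` generated by `(ε, −1)` (both normal).  Then
`(G × H)/N ≅ ((G × Circle)/Nc) ⋊_ξ ℤ₂`, where `ξ` sends the nontrivial element of `ℤ₂`
to the automorphism induced by `(g, z) ↦ (g, conj z)`.  For `G = Spin(V,h)`, `ε = −1`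
this is `Spin^o₊(V,h) ≅ Spin^c(V,h) ⋊ ℤ₂`. -/
theorem spino_plus_iso_spinc_rtimes_z2 {G : Type*} [Group G]
    (ε : G) (hcen : ∀ g : G, ε * g = g * ε) (hsq : ε * ε = 1)
    (act : Multiplicative (ZMod 2) →* MulAut Circle)
    (hact : ∀ z : Circle, act (Multiplicative.ofAdd 1) z = conjC z)
    (N : Subgroup (G × (Circle ⋊[act] Multiplicative (ZMod 2)))) [N.Normal]
    (hN : N = Subgroup.zpowers (ε, ⟨negOneC, 1⟩))
    (Nc : Subgroup (G × Circle)) [Nc.Normal]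
    (hNc : Nc = Subgroup.zpowers (ε, negOneC))
    (ξ : Multiplicative (ZMod 2) →* MulAut ((G × Circle) ⧸ Nc))
    (hξ : ∀ (g : G) (z : Circle),
      ξ (Multiplicative.ofAdd 1) (QuotientGroup.mk (g, z)) =
        QuotientGroup.mk (g, conjC z)) :
    Nonempty ((G × (Circle ⋊[act] Multiplicative (ZMod 2))) ⧸ N ≃*
      (((G × Circle) ⧸ Nc) ⋊[ξ] Multiplicative (ZMod 2))) :=
  spino_plus_iso_spinc_rtimes_z2_general ε act hact N hN Nc hNc ξ hξ
end

section
/- Let p, q ∈ ℕ with p − q ≡ 3 or 7 (mod 8), d = p + q, α = −1 if p − q ≡ 3 (mod 8) and α = +1 if p − q ≡ 7 (mod 8). Let γ₀ : Cl_{p,q} → End_ℝ(S₀) be an elementary real pinor representation, J = γ₀(ω), and let D ∈ End_ℝ(S₀) be invertible with D ∘ γ₀(ι(v)) = −γ₀(ι(v)) ∘ D for all v ∈ ℝ^d and D ∘ D = α·id. Then the anticommutant {T ∈ End_ℝ(S₀) : T ∘ γ₀(ι(v)) = −γ₀(ι(v)) ∘ T for all v ∈ ℝ^d} equals the ℝ-linear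 span of {D, J ∘ D}, and D and J ∘ D are linearly independent over ℝ. -/
private lemma prod_mul_anticomm {R : Type*} [Ring R] (x : R) :
    ∀ l : List R, (∀ a ∈ l, a * x = -(x * a)) →
      l.prod * x = (-1 : ℤ) ^ l.length • (x * l.prod)
  | [], _ => by simp
  | a :: l, h => by
    have ih := prod_mul_anticomm x l (fun b hb => h b (List.mem_cons_of_mem a hb))
    have ha := h a List.mem_cons_self
    calc (a :: l).prod * x = a * (l.prod * x) := by rw [List.prod_cons, mul_assoc]
      _ = (-1 : ℤ) ^ l.length • (a * (x * l.prod)) := by rw [ih, mul_smul_comm]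
      _ = (-1 : ℤ) ^ l.length • ((a * x) * l.prod) := by rw [mul_assoc]
      _ = (-1 : ℤ) ^ l.length • (-((x * a) * l.prod)) := by rw [ha, neg_mul]
      _ = (-1 : ℤ) ^ (l.length + 1) • (x * (a :: l).prod) := by
          rw [pow_succ, mul_smul, neg_one_zsmul, mul_assoc, List.prod_cons]

private lemma ofFn_prod_comm {R : Type*} [Ring R] :
    ∀ (n : ℕ) (g : Fin n → R) (x : R) (j : Fin n), x * g j = g j * x →
      (∀ i, i ≠ j → x * g i = -(g i * x)) →
      (List.ofFn g).prod * x = (-1 : ℤ) ^ (n - 1) • (x * (List.ofFn g).prod)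
  | 0, _, _, j, _, _ => j.elim0
  | n + 1, g, x, j, hc, ha => by
    induction j using Fin.cases with
    | zero =>
      have htail : (List.ofFn fun i : Fin n => g i.succ).prod * x
          = (-1 : ℤ) ^ n • (x * (List.ofFn fun i : Fin n => g i.succ).prod) := by
        have := prod_mul_anticomm x (List.ofFn fun i : Fin n => g i.succ) ?_
        · simpa using this
        · intro a hb
          obtain ⟨i, rfl⟩ := List.mem_ofFn.1 hb
          rw [ha i.succ (Fin.succ_ne_zero i), neg_neg]
      rw [List.ofFn_succ, List.prod_cons, Nat.add_sub_cancel]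
      calc g 0 * (List.ofFn fun i : Fin n => g i.succ).prod * x
          = g 0 * ((List.ofFn fun i : Fin n => g i.succ).prod * x) := by rw [mul_assoc]
        _ = (-1 : ℤ) ^ n • (g 0 * (x * (List.ofFn fun i : Fin n => g i.succ).prod)) := by
            rw [htail, mul_smul_comm]
        _ = (-1 : ℤ) ^ n • (x * (g 0 * (List.ofFn fun i : Fin n => g i.succ).prod)) := by
            rw [← mul_assoc, ← hc, mul_assoc]
    | succ i =>
      have hn : 0 < n := i.pos
      have htail := ofFn_prod_comm n (fun k => g k.succ) x i hc
        (fun k hk => ha k.succ (fun h => hk (Fin.succ_injective n h)))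
      have h0 : g 0 * x = -(x * g 0) := by
        rw [ha 0 (Ne.symm (Fin.succ_ne_zero i)), neg_neg]
      rw [List.ofFn_succ, List.prod_cons, Nat.add_sub_cancel]
      calc g 0 * (List.ofFn fun k : Fin n => g k.succ).prod * x
          = g 0 * ((List.ofFn fun k : Fin n => g k.succ).prod * x) := by rw [mul_assoc]
        _ = (-1 : ℤ) ^ (n - 1) • ((g 0 * x) * (List.ofFn fun k : Fin n => g k.succ).prod) := by
            rw [htail, mul_smul_comm, mul_assoc]
        _ = (-1 : ℤ) ^ (n - 1) • (-(x * g 0 * (List.ofFn fun k : Fin n => g k.succ).prod)) := by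
            rw [h0, neg_mul]
        _ = (-1 : ℤ) ^ n • (x * (g 0 * (List.ofFn fun k : Fin n => g k.succ).prod)) := by
            rw [← neg_one_zsmul (x * g 0 * _), smul_smul, ← pow_succ,
              Nat.sub_add_cancel hn, mul_assoc]

private lemma ofFn_prod_sq {A : Type*} [Ring A] [Algebra ℝ A] :
    ∀ (n : ℕ) (g : Fin n → A) (ε : Fin n → ℝ),
      (∀ i j, i ≠ j → g i * g j = -(g j * g i)) → (∀ i, g i * g i = ε i • 1) →
      (List.ofFn g).prod * (List.ofFn g).prod
        = ((-1 : ℝ) ^ n.choose 2 * ∏ i, ε i) • 1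
  | 0, g, ε, _, _ => by simp
  | n + 1, g, ε, ha, hs => by
    have ih := ofFn_prod_sq n (fun k => g k.succ) (fun k => ε k.succ)
      (fun i j hij => ha i.succ j.succ (fun h => hij (Fin.succ_injective n h)))
      (fun i => hs i.succ)
    set T := (List.ofFn fun k : Fin n => g k.succ).prod with hT
    have hmove : T * g 0 = (-1 : ℤ) ^ n • (g 0 * T) := by
      have := prod_mul_anticomm (g 0) (List.ofFn fun k : Fin n => g k.succ) ?_
      · simpa using this
      · intro a hb
        obtain ⟨i, rfl⟩ := List.mem_ofFn.1 hb
        exact ha i.succ 0 (Fin.succ_ne_zero i)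
    rw [List.ofFn_succ, List.prod_cons, ← hT]
    calc (g 0 * T) * (g 0 * T) = g 0 * (T * g 0) * T := by
          rw [mul_assoc, mul_assoc, mul_assoc]
      _ = (-1 : ℤ) ^ n • ((g 0 * g 0) * (T * T)) := by
          rw [hmove, mul_smul_comm, smul_mul_assoc, mul_assoc, mul_assoc, ← mul_assoc]
      _ = (-1 : ℤ) ^ n •
          ((ε 0 • (1:A)) * (((-1 : ℝ) ^ n.choose 2 * ∏ i : Fin n, ε i.succ) • 1)) := by
          rw [hs 0, ih]
      _ = ((-1 : ℝ) ^ (n + 1).choose 2 * ∏ i : Fin (n+1), ε i) • 1 := by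
          rw [smul_mul_smul_comm, one_mul, ← Int.cast_smul_eq_zsmul ℝ, smul_smul]
          congr 1
          push_cast
          rw [Fin.prod_univ_succ, Nat.choose_succ_succ, Nat.choose_one_right, pow_add]
          ring

private lemma parity_aux (p q : ℕ)
    (hα : (((p : ℤ) - (q : ℤ)) ≡ 3 [ZMOD 8]) ∨ (((p : ℤ) - (q : ℤ)) ≡ 7 [ZMOD 8])) :
    Odd ((p+q).choose 2 + q) ∧ Odd (p+q) := by
  have hdvd : (8:ℤ) ∣ 3 - ((p:ℤ) - q) ∨ (8:ℤ) ∣ 7 - ((p:ℤ) - q) := by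
    rcases hα with h | h
    · exact Or.inl h.dvd
    · exact Or.inr h.dvd
  obtain ⟨k, hk⟩ : ∃ k : ℤ, 3 - ((p:ℤ) - q) = 8 * k ∨ 7 - ((p:ℤ) - q) = 8 * k := by
    rcases hdvd with ⟨k, hk⟩ | ⟨k, hk⟩ <;> exact ⟨k, by omega⟩
  have hodd : (p + q) % 2 = 1 := by omega
  obtain ⟨m, hm⟩ : ∃ m, p + q = 2 * m + 1 := ⟨(p+q)/2, by omega⟩
  have hch : (p+q).choose 2 = (2*m+1) * m := by
    rw [Nat.choose_two_right, hm]
    have h1 : 2*m+1-1 = 2*m := by omega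
    have h2 : (2*m+1) * (2*m) = ((2*m+1) * m) * 2 := by ring
    rw [h1, h2, Nat.mul_div_cancel]; omega
  refine ⟨?_, by rw [hm]; exact ⟨m, by omega⟩⟩
  have heq : (2*m+1)*m + q = 2*(m*m) + (m+q) := by ring
  rw [hch, heq, Nat.odd_iff]
  have hmq : (m + q) % 2 = 1 := by omega
  omega

private lemma schur_aux {M : Type*} [AddCommGroup M] [Module ℝ M]
    {Q : QuadraticForm ℝ M}
    {S₀ : Type*} [AddCommGroup S₀] [Module ℝ S₀] [FiniteDimensional ℝ S₀]
    (γ₀ : CliffordAlgebra Q →ₐ[ℝ] Module.End ℝ S₀)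
    (hsimple : ∀ W : Submodule ℝ S₀,
      (∀ x : CliffordAlgebra Q, ∀ w ∈ W, γ₀ x w ∈ W) → W = ⊥ ∨ W = ⊤)
    (C : Module.End ℝ S₀) (hC : ∀ x, C * γ₀ x = γ₀ x * C) (hC0 : C ≠ 0) :
    IsUnit C := by
  have hinv : ∀ x : CliffordAlgebra Q, ∀ w ∈ LinearMap.ker C, γ₀ x w ∈ LinearMap.ker C := by
    intro x w hw
    have hxw : C (γ₀ x w) = γ₀ x (C w) := by
      have := congrArg (fun f => f w) (hC x)
      simpa [Module.End.mul_apply] using this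
    simp only [LinearMap.mem_ker] at hw ⊢
    rw [hxw, hw, map_zero]
  have hker : LinearMap.ker C = ⊥ := by
    rcases hsimple (LinearMap.ker C) hinv with h | h
    · exact h
    · exact absurd (LinearMap.ker_eq_top.mp h) hC0
  rw [Module.End.isUnit_iff]
  exact ⟨LinearMap.ker_eq_bot.mp hker,
    (LinearMap.injective_iff_surjective).mp (LinearMap.ker_eq_bot.mp hker)⟩

open Polynomial in
private lemma commutant_aux {M : Type*} [AddCommGroup M] [Module ℝ M]
    {Q : QuadraticForm ℝ M}
    {S₀ : Type*} [AddCommGroup S₀] [Module ℝ S₀] [Nontrivial S₀] [FiniteDimensional ℝ S₀]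
    (γ₀ : CliffordAlgebra Q →ₐ[ℝ] Module.End ℝ S₀)
    (hSchur : ∀ C : Module.End ℝ S₀, (∀ x, C * γ₀ x = γ₀ x * C) → C ≠ 0 → IsUnit C)
    (J : Module.End ℝ S₀) (hJc : ∀ x, J * γ₀ x = γ₀ x * J) (hJJ : J * J = -1)
    (C : Module.End ℝ S₀) (hCc : ∀ x, C * γ₀ x = γ₀ x * C) (hCJ : C * J = J * C) :
    ∃ a b : ℝ, C = a • 1 + b • J := by
  classical
  have hPc : ∀ r : ℝ[X], ∀ x, (aeval C r) * γ₀ x = γ₀ x * (aeval C r) := by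
    intro r
    induction r using Polynomial.induction_on' with
    | add f g hf hg =>
      intro x; rw [map_add, add_mul, mul_add, hf, hg]
    | monomial n a =>
      intro x
      rw [aeval_monomial]
      have h1 : Commute (γ₀ x) C := (hCc x).symm
      have h3 : Commute (γ₀ x) (algebraMap ℝ (Module.End ℝ S₀) a) :=
        (Algebra.commutes a (γ₀ x)).symm
      exact (h3.mul_right (h1.pow_right n)).symm.eq
  have hint : IsIntegral ℝ C := Algebra.IsIntegral.isIntegral C
  have hμ0 : minpoly ℝ C ≠ 0 := minpoly.ne_zero hint
  have hμdeg : 0 < (minpoly ℝ C).natDegree := minpoly.natDegree_pos hint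
  obtain ⟨π, hπirr, g, hg⟩ :
      ∃ π, Irreducible π ∧ ∃ g, minpoly ℝ C = π * g := by
    obtain ⟨π, hπ, hdvd⟩ := WfDvdMonoid.exists_irreducible_factor
      (Polynomial.not_isUnit_of_natDegree_pos _ hμdeg) hμ0
    exact ⟨π, hπ, hdvd⟩
  have hπ0 : aeval C π = 0 := by
    by_contra hne
    have hu : IsUnit (aeval C π) := hSchur _ (hPc π) hne
    have hgz : aeval C g = 0 := by
      have h0 : aeval C π * aeval C g = 0 := by
        rw [← map_mul, ← hg, minpoly.aeval]
      obtain ⟨u, hu⟩ := hu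
      calc aeval C g = (↑u⁻¹ * u) * aeval C g := by simp
        _ = ↑u⁻¹ * (aeval C π * aeval C g) := by rw [mul_assoc, hu]
        _ = 0 := by rw [h0, mul_zero]
    have hgne : g ≠ 0 := fun h => hμ0 (by rw [hg, h, mul_zero])
    have hdvd := minpoly.dvd ℝ C hgz
    have hle := Polynomial.natDegree_le_of_dvd hdvd hgne
    have : (minpoly ℝ C).natDegree = π.natDegree + g.natDegree := by
      rw [hg, Polynomial.natDegree_mul hπirr.ne_zero hgne]
    have hπpos : 0 < π.natDegree := hπirr.natDegree_pos
    omega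
  have hπle : π.natDegree ≤ 2 := hπirr.natDegree_le_two
  have hπpos : 0 < π.natDegree := hπirr.natDegree_pos
  have hEnd1 : (1 : Module.End ℝ S₀) ≠ 0 := by
    obtain ⟨s, hs⟩ := exists_ne (0 : S₀)
    intro h
    exact hs (by simpa using congrArg (fun f : Module.End ℝ S₀ => f s) h)
  interval_cases hdeg : π.natDegree
  · -- degree 1
    obtain ⟨a, ha, b, hab⟩ := Polynomial.natDegree_eq_one.mp hdeg
    have key : a • C + b • (1 : Module.End ℝ S₀) = 0 := by
      rw [← hab, map_add, map_mul, aeval_C, aeval_X, aeval_C,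
        Algebra.algebraMap_eq_smul_one, Algebra.algebraMap_eq_smul_one,
        smul_mul_assoc, one_mul] at hπ0
      exact hπ0
    refine ⟨a⁻¹ * (-b), 0, ?_⟩
    have h2 : a • C = (-b) • (1 : Module.End ℝ S₀) := by
      rw [neg_smul]; linear_combination (norm := module) key
    calc C = a⁻¹ • (a • C) := by rw [smul_smul, inv_mul_cancel₀ ha, one_smul]
      _ = (a⁻¹ * (-b)) • 1 + (0:ℝ) • J := by rw [h2, smul_smul, zero_smul, add_zero]
  · -- degree 2
    have ha : π.coeff 2 ≠ 0 := by
      rw [← hdeg]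
      exact mt Polynomial.leadingCoeff_eq_zero.mp hπirr.ne_zero
    set a := π.coeff 2 with haa
    set b := π.coeff 1 with hbb
    set c := π.coeff 0 with hcc
    have hexp : c • (1 : Module.End ℝ S₀) + b • C + a • (C * C) = 0 := by
      have h3 : π.natDegree < 3 := by omega
      have := Polynomial.aeval_eq_sum_range' h3 C
      rw [hπ0] at this
      rw [Finset.sum_range_succ, Finset.sum_range_succ, Finset.sum_range_one] at this
      rw [pow_zero, pow_one, pow_two] at this
      linear_combination (norm := module) this.symm
    have hnoroot : ∀ x : ℝ, ¬ π.IsRoot x := by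
      intro x hx
      obtain ⟨t, ht⟩ := (Polynomial.dvd_iff_isRoot).mpr hx
      rcases hπirr.isUnit_or_isUnit ht with h | h
      · exact (Polynomial.not_isUnit_X_sub_C x) h
      · obtain ⟨r, hr, hrt⟩ := Polynomial.isUnit_iff.mp h
        have : π.natDegree = 1 := by
          rw [ht, ← hrt, Polynomial.natDegree_mul (Polynomial.X_sub_C_ne_zero x)
            (by simpa [← hrt] using h.ne_zero), Polynomial.natDegree_X_sub_C,
            Polynomial.natDegree_C]
        omega
    have heval : ∀ x : ℝ, π.eval x = c + b * x + a * x^2 := by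
      intro x
      have h3 : π.natDegree < 3 := by omega
      have := Polynomial.eval_eq_sum_range' h3 x
      rw [this, Finset.sum_range_succ, Finset.sum_range_succ, Finset.sum_range_one]
      ring
    have hq : ∀ x : ℝ, a * (x * x) + b * x + c ≠ 0 := by
      intro x hx
      apply hnoroot x
      rw [Polynomial.IsRoot, heval]
      nlinarith [hx]
    have hdisc : discrim a b c < 0 := by
      rcases lt_or_ge (discrim a b c) 0 with h | h
      · exact h
      · exfalso
        obtain ⟨x, hx⟩ := exists_quadratic_eq_zero ha
          ⟨Real.sqrt (discrim a b c), (Real.mul_self_sqrt h).symm⟩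
        exact hq x hx
    set t : ℝ := c / a - (b / a) ^ 2 / 4 with htdef
    have htpos : 0 < t := by
      have h4 : t = -discrim a b c / (4 * a^2) := by
        rw [htdef, discrim]; field_simp; ring
      rw [h4]
      exact div_pos (by linarith) (by positivity)
    set E : Module.End ℝ S₀ := C + (b / a / 2) • 1 with hEdef
    have hinv : a⁻¹ • (c • (1 : Module.End ℝ S₀) + b • C + a • (C * C)) = 0 := by
      rw [hexp, smul_zero]
    have hCsq : C * C = -((b/a) • C) - (c/a) • 1 := by
      have h5 : (c/a) • (1 : Module.End ℝ S₀) + (b/a) • C + (C * C) = 0 := by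
        have h6 := hinv
        rw [smul_add, smul_add, smul_smul, smul_smul, smul_smul,
          inv_mul_cancel₀ ha, one_smul] at h6
        rw [div_eq_inv_mul, div_eq_inv_mul]
        exact h6
      linear_combination (norm := module) h5
    have hEE : E * E = (-t) • (1 : Module.End ℝ S₀) := by
      have hexp2 : E * E = C * C + (b/a/2) • C + (b/a/2) • C + ((b/a/2)*(b/a/2)) • 1 := by
        rw [hEdef]
        simp only [mul_add, add_mul, mul_smul_comm, smul_mul_assoc, mul_one, one_mul,
          smul_smul, smul_add]
        module
      rw [hexp2, hCsq, htdef]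
      match_scalars <;> field_simp <;> ring
    set r : ℝ := Real.sqrt t with hrdef
    have hr0 : r ≠ 0 := ne_of_gt (Real.sqrt_pos.mpr htpos)
    have hr2 : r * r = t := Real.mul_self_sqrt htpos.le
    set E' : Module.End ℝ S₀ := r⁻¹ • E with hE'def
    have hE'E' : E' * E' = -1 := by
      rw [hE'def, smul_mul_assoc, mul_smul_comm, smul_smul, hEE, smul_smul]
      have : r⁻¹ * r⁻¹ * -t = -1 := by
        field_simp [← hr2]
        rw [← hr2]; ring
      rw [this, neg_smul, one_smul]
    have hE'c : ∀ x, E' * γ₀ x = γ₀ x * E' := by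
      intro x
      rw [hE'def, hEdef, smul_mul_assoc, mul_smul_comm, add_mul, mul_add,
        smul_mul_assoc, mul_smul_comm, one_mul, mul_one, hCc]
    have hE'J : E' * J = J * E' := by
      rw [hE'def, hEdef, smul_mul_assoc, mul_smul_comm, add_mul, mul_add,
        smul_mul_assoc, mul_smul_comm, one_mul, mul_one, hCJ]
    obtain ⟨K, hKdef⟩ : ∃ K : Module.End ℝ S₀, K = J * E' := ⟨_, rfl⟩
    have hKc : ∀ x, K * γ₀ x = γ₀ x * K := by
      intro x
      rw [hKdef, mul_assoc, hE'c, ← mul_assoc, hJc, mul_assoc]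
    have hKK : K * K = 1 := by
      rw [hKdef]
      calc J * E' * (J * E') = J * (E' * J) * E' := by
            rw [mul_assoc, mul_assoc, mul_assoc]
        _ = (J * J) * (E' * E') := by rw [hE'J, ← mul_assoc, mul_assoc]
        _ = 1 := by rw [hJJ, hE'E', neg_mul_neg, one_mul]
    have hfac : (K - 1) * (K + 1) = 0 := by
      calc (K - 1) * (K + 1) = K * K - 1 := by noncomm_ring
        _ = 0 := by rw [hKK, sub_self]
    have hK1 : K = 1 ∨ K = -1 := by
      by_contra hcon
      push_neg at hcon
      have h1 : IsUnit (K - 1) := by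
        apply hSchur _ (fun x => by rw [sub_mul, mul_sub, hKc, one_mul, mul_one])
        exact sub_ne_zero.mpr hcon.1
      have h2 : IsUnit (K + 1) := by
        apply hSchur _ (fun x => by rw [add_mul, mul_add, hKc, one_mul, mul_one])
        intro h
        exact hcon.2 (by linear_combination (norm := module) h)
      exact (h1.mul h2).ne_zero hfac
    have hJK : J * K = -E' := by
      rw [hKdef, ← mul_assoc, hJJ, neg_one_mul]
    have hE'J' : E' = J ∨ E' = -J := by
      rcases hK1 with h | h
      · right
        rw [h, mul_one] at hJK
        rw [hJK, neg_neg]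
      · left
        rw [h] at hJK
        have hneg : J * -1 = -J := by simp
        rw [hneg] at hJK
        exact (neg_inj.mp hJK).symm
    have hE : E = r • E' := by
      rw [hE'def, smul_smul, mul_inv_cancel₀ hr0, one_smul]
    have hCE : C = (-(b/a/2)) • 1 + E := by
      rw [hEdef]
      module
    rcases hE'J' with h | h
    · exact ⟨-(b/a/2), r, by rw [hCE, hE, h]⟩
    · refine ⟨-(b/a/2), -r, ?_⟩
      rw [hCE, hE, h]
      module

open CliffordAlgebra in
/-- In signature `p − q ≡ 3, 7 (mod 8)`, given an elementary real pinor representation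
`γ₀`, `J = γ₀(ω)` and an invertible `D` anticommuting with all `γ₀(ι(v))` with
`D² = α·id`, the anticommutant of the representation equals the ℝ-linear span of
`{D, J∘D}`, and `D`, `J∘D` are linearly independent. -/
theorem anticommutant_eq_span (p q : ℕ) (α : ℝ)
    (hα : (((p : ℤ) - (q : ℤ)) ≡ 3 [ZMOD 8] ∧ α = -1) ∨
      (((p : ℤ) - (q : ℤ)) ≡ 7 [ZMOD 8] ∧ α = 1))
    (Q : QuadraticForm ℝ (Fin (p + q) → ℝ))
    (hQ : ∀ x : Fin (p + q) → ℝ,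
      Q x = ∑ i : Fin (p + q), (if (i : ℕ) < p then (1 : ℝ) else -1) * x i ^ 2)
    {S₀ : Type*} [AddCommGroup S₀] [Module ℝ S₀] [Nontrivial S₀] [FiniteDimensional ℝ S₀]
    (γ₀ : CliffordAlgebra Q →ₐ[ℝ] Module.End ℝ S₀)
    (hsimple : ∀ W : Submodule ℝ S₀,
      (∀ x : CliffordAlgebra Q, ∀ w ∈ W, γ₀ x w ∈ W) → W = ⊥ ∨ W = ⊤)
    (J : Module.End ℝ S₀)
    (hJ : J = γ₀ ((List.ofFn fun i : Fin (p + q) =>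
      CliffordAlgebra.ι Q (Pi.single i 1)).prod))
    (D : Module.End ℝ S₀) (hDu : IsUnit D)
    (hD1 : ∀ v : Fin (p + q) → ℝ, D * γ₀ (ι Q v) = -(γ₀ (ι Q v) * D))
    (hD2 : D * D = α • (1 : Module.End ℝ S₀)) :
    (∀ T : Module.End ℝ S₀,
      (∀ v : Fin (p + q) → ℝ, T * γ₀ (ι Q v) = -(γ₀ (ι Q v) * T)) ↔
        T ∈ Submodule.span ℝ ({D, J * D} : Set (Module.End ℝ S₀))) ∧
    LinearIndependent ℝ ![D, J * D] := by
  classical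
  -- basic scalar facts
  have hα' : ((p : ℤ) - (q : ℤ)) ≡ 3 [ZMOD 8] ∨ ((p : ℤ) - (q : ℤ)) ≡ 7 [ZMOD 8] := by
    rcases hα with ⟨h, _⟩ | ⟨h, _⟩
    · exact Or.inl h
    · exact Or.inr h
  have hαsq : α * α = 1 := by
    rcases hα with ⟨_, rfl⟩ | ⟨_, rfl⟩ <;> norm_num
  obtain ⟨hoddch, hoddn⟩ := parity_aux p q hα'
  -- the generators
  obtain ⟨ε, hε⟩ : ∃ ε : Fin (p+q) → ℝ,
      ε = fun i : Fin (p+q) => if (i : ℕ) < p then (1:ℝ) else -1 := ⟨_, rfl⟩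
  obtain ⟨g, hgdef⟩ : ∃ g : Fin (p+q) → Module.End ℝ S₀,
      g = fun i => γ₀ (ι Q (Pi.single i 1)) := ⟨_, rfl⟩
  -- values of Q on basis vectors
  have hsingle : ∀ i : Fin (p+q), Q (Pi.single i 1) = ε i := by
    intro i
    rw [hQ]
    rw [Finset.sum_eq_single i]
    · rw [hε]; simp
    · intro j _ hj
      simp [Pi.single_apply, hj]
    · simp
  have hpolar : ∀ i j : Fin (p+q), i ≠ j →
      QuadraticMap.polar Q (Pi.single i 1) (Pi.single j 1) = 0 := by
    intro i j hij
    have hadd : Q (Pi.single i 1 + Pi.single j 1)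
        = Q (Pi.single i 1) + Q (Pi.single j 1) := by
      rw [hQ, hQ, hQ, ← Finset.sum_add_distrib]
      refine Finset.sum_congr rfl fun k _ => ?_
      rcases eq_or_ne k i with rfl | hki
      · simp [Pi.single_apply, hij.symm, Ne.symm hij]
      · rcases eq_or_ne k j with rfl | hkj
        · simp [Pi.single_apply, hki]
        · simp [Pi.single_apply, hki, hkj]
    simp [QuadraticMap.polar, hadd]
  -- algebra facts about the generators
  have hgs : ∀ i, g i * g i = ε i • 1 := by
    intro i
    rw [hgdef]
    simp only []
    rw [← map_mul γ₀, ι_sq_scalar, hsingle, AlgHom.commutes, Algebra.algebraMap_eq_smul_one]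
  have hganti : ∀ i j, i ≠ j → g i * g j = -(g j * g i) := by
    intro i j hij
    have h1 : ι Q (Pi.single i 1) * ι Q (Pi.single j 1)
        + ι Q (Pi.single j 1) * ι Q (Pi.single i 1) = 0 := by
      rw [ι_mul_ι_add_swap, hpolar i j hij, map_zero]
    have h2 : ι Q (Pi.single i (1:ℝ)) * ι Q (Pi.single j 1)
        = -(ι Q (Pi.single j 1) * ι Q (Pi.single i 1)) :=
      add_eq_zero_iff_eq_neg.mp h1
    rw [hgdef]
    simp only []
    rw [← map_mul γ₀, ← map_mul γ₀, h2, map_neg]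
  -- J as a product
  have hJprod : J = (List.ofFn g).prod := by
    rw [hJ, map_list_prod, List.map_ofFn, hgdef]
    rfl
  -- J * J = -1
  have hJJ : J * J = -1 := by
    rw [hJprod, ofFn_prod_sq (p+q) g ε hganti hgs]
    have hprodε : ∏ i, ε i = (-1 : ℝ) ^ q := by
      rw [hε]
      rw [Fin.prod_univ_add]
      simp [Fin.castAdd, Fin.natAdd]
    rw [hprodε, ← pow_add]
    rw [Odd.neg_one_pow hoddch]
    rw [neg_one_smul]
  -- J commutes with each generator
  have hJg : ∀ j, J * g j = g j * J := by
    intro j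
    have := ofFn_prod_comm (p+q) g (g j) j rfl
      (fun i hij => by rw [hganti j i (fun h => hij h.symm)])
    rw [hJprod]
    rw [this]
    have heven : Even ((p+q) - 1) := by
      obtain ⟨m, hm⟩ := hoddn
      exact ⟨m, by omega⟩
    rw [heven.neg_one_pow, one_zsmul]
  -- decomposition of ι Q v
  have hιv : ∀ v : Fin (p+q) → ℝ, γ₀ (ι Q v) = ∑ i, v i • g i := by
    intro v
    have hv : ∑ i : Fin (p+q), v i • (Pi.single i (1:ℝ) : Fin (p+q) → ℝ) = v := by
      calc ∑ i : Fin (p+q), v i • (Pi.single i (1:ℝ) : Fin (p+q) → ℝ)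
          = ∑ i : Fin (p+q), (Pi.single i (v i) : Fin (p+q) → ℝ) := by
            refine Finset.sum_congr rfl fun i _ => ?_
            rw [← Pi.single_smul, smul_eq_mul, mul_one]
        _ = v := Finset.univ_sum_single v
    calc γ₀ (ι Q v)
        = γ₀ (ι Q (∑ i : Fin (p+q), v i • (Pi.single i (1:ℝ) : Fin (p+q) → ℝ))) := by
          rw [hv]
      _ = ∑ i, v i • g i := by
          rw [map_sum, map_sum]
          refine Finset.sum_congr rfl fun i _ => ?_
          rw [map_smul, map_smul, hgdef]
  -- J commutes with all γ₀ (ι Q v)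
  have hJv : ∀ v : Fin (p+q) → ℝ, J * γ₀ (ι Q v) = γ₀ (ι Q v) * J := by
    intro v
    rw [hιv, Finset.mul_sum, Finset.sum_mul]
    refine Finset.sum_congr rfl fun i _ => ?_
    rw [mul_smul_comm, smul_mul_assoc, hJg]
  -- Schur lemma
  have hSchur : ∀ C : Module.End ℝ S₀,
      (∀ x, C * γ₀ x = γ₀ x * C) → C ≠ 0 → IsUnit C :=
    fun C hC hC0 => schur_aux γ₀ hsimple C hC hC0
  -- commuting with generators implies commuting with everything
  have hgen : ∀ C : Module.End ℝ S₀,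
      (∀ v : Fin (p+q) → ℝ, C * γ₀ (ι Q v) = γ₀ (ι Q v) * C) →
      ∀ x, C * γ₀ x = γ₀ x * C := by
    intro C hC x
    induction x using CliffordAlgebra.induction with
    | algebraMap r =>
      rw [AlgHom.commutes]
      exact (Algebra.commutes r C).symm
    | ι v => exact hC v
    | mul a b hab hbb =>
      rw [map_mul, ← mul_assoc, hab, mul_assoc, hbb, mul_assoc]
    | add a b hab hbb =>
      rw [map_add, mul_add, add_mul, hab, hbb]
  -- the inverse of D
  have hDinv : D * (α • D) = 1 ∧ (α • D) * D = 1 := by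
    constructor
    · rw [mul_smul_comm, hD2, smul_smul, hαsq, one_smul]
    · rw [smul_mul_assoc, hD2, smul_smul, hαsq, one_smul]
  -- (α • D) anticommutes
  have hDinv1 : ∀ v : Fin (p+q) → ℝ, (α • D) * γ₀ (ι Q v) = -(γ₀ (ι Q v) * (α • D)) := by
    intro v
    rw [smul_mul_assoc, hD1, mul_smul_comm, smul_neg]
  -- J * D anticommutes
  have hJD1 : ∀ v : Fin (p+q) → ℝ, (J * D) * γ₀ (ι Q v) = -(γ₀ (ι Q v) * (J * D)) := by
    intro v
    calc (J * D) * γ₀ (ι Q v) = J * (D * γ₀ (ι Q v)) := by rw [mul_assoc]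
      _ = J * -(γ₀ (ι Q v) * D) := by rw [hD1]
      _ = -((J * γ₀ (ι Q v)) * D) := by rw [mul_neg, mul_assoc]
      _ = -((γ₀ (ι Q v) * J) * D) := by rw [hJv]
      _ = -(γ₀ (ι Q v) * (J * D)) := by rw [mul_assoc]
  constructor
  · intro T
    constructor
    · -- anticommutant → span
      intro hT
      obtain ⟨C, hCdef⟩ : ∃ C : Module.End ℝ S₀, C = T * (α • D) := ⟨_, rfl⟩
      have hCcomm : ∀ v : Fin (p+q) → ℝ, C * γ₀ (ι Q v) = γ₀ (ι Q v) * C := by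
        intro v
        calc C * γ₀ (ι Q v) = T * ((α • D) * γ₀ (ι Q v)) := by rw [hCdef, mul_assoc]
          _ = -(T * (γ₀ (ι Q v) * (α • D))) := by rw [hDinv1, mul_neg]
          _ = -((T * γ₀ (ι Q v)) * (α • D)) := by rw [mul_assoc]
          _ = -((-(γ₀ (ι Q v) * T)) * (α • D)) := by rw [hT]
          _ = γ₀ (ι Q v) * (T * (α • D)) := by rw [neg_mul, neg_neg, mul_assoc]
          _ = γ₀ (ι Q v) * C := by rw [hCdef]
      have hCx : ∀ x, C * γ₀ x = γ₀ x * C := hgen C hCcomm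
      have hCJ : C * J = J * C := by
        rw [hJ]
        exact hCx _
      obtain ⟨a, b, hab⟩ := commutant_aux γ₀ hSchur J (hgen J hJv) hJJ C hCx hCJ
      have hTC : T = C * D := by
        calc T = T * ((α • D) * D) := by rw [hDinv.2, mul_one]
          _ = C * D := by rw [← mul_assoc, ← hCdef]
      rw [hTC, hab, add_mul, smul_mul_assoc, smul_mul_assoc, one_mul]
      exact Submodule.mem_span_pair.mpr ⟨a, b, rfl⟩
    · -- span → anticommutant
      intro hT
      obtain ⟨s, u, hsu⟩ := Submodule.mem_span_pair.mp hT
      intro v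
      rw [← hsu]
      rw [add_mul, smul_mul_assoc, smul_mul_assoc, hD1, hJD1]
      rw [mul_add, mul_smul_comm, mul_smul_comm]
      module
  · -- linear independence
    rw [LinearIndependent.pair_iff]
    intro s u hsu
    have h1 : (s • 1 + u • J) * D = 0 := by
      rw [add_mul, smul_mul_assoc, smul_mul_assoc, one_mul]
      exact hsu
    have h2 : s • (1 : Module.End ℝ S₀) + u • J = 0 := by
      calc s • (1 : Module.End ℝ S₀) + u • J
          = ((s • 1 + u • J) * D) * (α • D) := by rw [mul_assoc, hDinv.1, mul_one]
        _ = 0 := by rw [h1, zero_mul]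
    obtain ⟨w, hw⟩ := exists_ne (0 : S₀)
    have hu : u = 0 := by
      by_contra hu0
      have hJeq : J = (u⁻¹ * -s) • (1 : Module.End ℝ S₀) := by
        have h3 : u • J = (-s) • (1 : Module.End ℝ S₀) := by
          linear_combination (norm := module) h2
        calc J = u⁻¹ • (u • J) := by rw [smul_smul, inv_mul_cancel₀ hu0, one_smul]
          _ = (u⁻¹ * -s) • (1 : Module.End ℝ S₀) := by rw [h3, smul_smul]
      have hJJ2 : ((u⁻¹ * -s) * (u⁻¹ * -s)) • (1 : Module.End ℝ S₀) = -1 := by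
        rw [← hJJ, hJeq, smul_mul_smul_comm, one_mul]
      have h4 : ((u⁻¹ * -s) * (u⁻¹ * -s)) • w = -w := by
        have := congrArg (fun f : Module.End ℝ S₀ => f w) hJJ2
        simpa using this
      have h5 : (((u⁻¹ * -s) * (u⁻¹ * -s)) + 1) • w = 0 := by
        rw [add_smul, one_smul, h4]
        abel
      rcases smul_eq_zero.mp h5 with h | h
      · nlinarith [h]
      · exact hw h
    have hs : s = 0 := by
      rw [hu, zero_smul, add_zero] at h2
      have h4 : s • w = 0 := by
        have := congrArg (fun f : Module.End ℝ S₀ => f w) h2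
        simpa using this
      rcases smul_eq_zero.mp h4 with h | h
      · exact h
      · exact absurd h hw
    exact ⟨hs, hu⟩
end

section
/- Let p, q ∈ ℕ with p − q ≡ 3 or 7 (mod 8), d = p + q, α = −1 if p − q ≡ 3 (mod 8) and α = +1 if p − q ≡ 7 (mod 8). Let γ₀ : Cl_{p,q} → End_ℝ(S₀) be an elementary real pinor representation, J = γ₀(ω), and let D ∈ End_ℝ(S₀) be invertible with D ∘ γ₀(ι(v)) = −γ₀(ι(v)) ∘ D for all v ∈ ℝ^d and D ∘ D = α·id. Let Q'_α be the quadratic form on ℝ² with Q'_α(x) = α(x₁² + x₂²), with Clifford algebra Cl(Q'_α) and embedding ι'. Then there is a unique unital ℝ-algebra homomorphism γ⁽²⁾ : Cl(Q'_α) → End_ℝ(S₀) with γ⁽²⁾(ι'(e₁)) = D and γ⁽²⁾(ι'(e₂)) = −α·(J ∘ D); this homomorphism satisfies γ⁽²⁾(ι'(e₁)·ι'(e₂)) = J, is injective, and its range equals the ℝ-linear span of {id, J, D, J ∘ D}. -/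
private lemma aux_comm {A : Type*} [Ring A] [Algebra ℝ A] {ι : Type*} (f : ι → A) (s : ι → ℝ) (a : A) :
    ∀ L : List ι, (∀ i ∈ L, f i * a = s i • (a * f i)) →
      (L.map f).prod * a = (L.map s).prod • (a * (L.map f).prod)
  | [], _ => by simp
  | i :: L, h => by
    have ih := aux_comm f s a L (fun j hj => h j (List.mem_cons_of_mem _ hj))
    simp only [List.map_cons, List.prod_cons]
    rw [mul_assoc, ih, mul_smul_comm, ← mul_assoc, h i (List.mem_cons_self),
      smul_mul_assoc, smul_smul, mul_comm ((L.map s).prod), mul_assoc]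

private lemma aux_sq {A : Type*} [Ring A] [Algebra ℝ A] {ι : Type*} (f : ι → A) (ε : ι → ℝ) :
    ∀ L : List ι, L.Nodup →
      (∀ i ∈ L, f i * f i = ε i • 1) →
      (∀ i ∈ L, ∀ j ∈ L, i ≠ j → f i * f j = -(f j * f i)) →
      (L.map f).prod * (L.map f).prod =
        (((-1 : ℝ)) ^ (L.length.choose 2) * (L.map ε).prod) • 1
  | [], _, _, _ => by simp
  | i :: L, hnd, hsq, hanti => by
    have hiL : i ∉ L := (List.nodup_cons.mp hnd).1
    have ih := aux_sq f ε L (List.nodup_cons.mp hnd).2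
      (fun j hj => hsq j (List.mem_cons_of_mem _ hj))
      (fun j hj k hk hjk => hanti j (List.mem_cons_of_mem _ hj) k (List.mem_cons_of_mem _ hk) hjk)
    have hc : (L.map f).prod * f i = ((-1 : ℝ)) ^ L.length • (f i * (L.map f).prod) := by
      have := aux_comm f (fun _ => (-1 : ℝ)) (f i) L (fun j hj => by
        rw [neg_one_smul]
        exact hanti j (List.mem_cons_of_mem _ hj) i (List.mem_cons_self)
          (fun h => hiL (h ▸ hj)))
      rwa [List.map_const', List.prod_replicate] at this
    simp only [List.map_cons, List.prod_cons, List.length_cons]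
    rw [mul_assoc, ← mul_assoc (L.map f).prod, hc, smul_mul_assoc, mul_smul_comm,
      ← mul_assoc, ← mul_assoc, hsq i (List.mem_cons_self), smul_mul_assoc, one_mul]
    rw [smul_mul_assoc, ih, smul_smul, smul_smul]
    congr 1
    rw [Nat.choose_succ_succ, Nat.choose_one_right, pow_add]
    ring

set_option maxHeartbeats 1000000 in
open CliffordAlgebra in
/-- In signature `p − q ≡ 3, 7 (mod 8)`, given `γ₀`, `J = γ₀(ω)` and a conjugation `D`,
there is a unique unital ℝ-algebra homomorphism `γ⁽²⁾ : Cl(Q'_α) → End_ℝ(S₀)` with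
`ι'(e₁) ↦ D`, `ι'(e₂) ↦ −α·(J∘D)`; it satisfies `γ⁽²⁾(ι'(e₁)ι'(e₂)) = J`, is injective,
and its range is the ℝ-span of `{id, J, D, J∘D}`. -/
theorem gamma2_exists_unique (p q : ℕ) (α : ℝ)
    (hα : (((p : ℤ) - (q : ℤ)) ≡ 3 [ZMOD 8] ∧ α = -1) ∨
      (((p : ℤ) - (q : ℤ)) ≡ 7 [ZMOD 8] ∧ α = 1))
    (Q : QuadraticForm ℝ (Fin (p + q) → ℝ))
    (hQ : ∀ x : Fin (p + q) → ℝ,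
      Q x = ∑ i : Fin (p + q), (if (i : ℕ) < p then (1 : ℝ) else -1) * x i ^ 2)
    {S₀ : Type*} [AddCommGroup S₀] [Module ℝ S₀] [Nontrivial S₀] [FiniteDimensional ℝ S₀]
    (γ₀ : CliffordAlgebra Q →ₐ[ℝ] Module.End ℝ S₀)
    (hsimple : ∀ W : Submodule ℝ S₀,
      (∀ x : CliffordAlgebra Q, ∀ w ∈ W, γ₀ x w ∈ W) → W = ⊥ ∨ W = ⊤)
    (J : Module.End ℝ S₀)
    (hJ : J = γ₀ ((List.ofFn fun i : Fin (p + q) =>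
      CliffordAlgebra.ι Q (Pi.single i 1)).prod))
    (D : Module.End ℝ S₀) (hDu : IsUnit D)
    (hD1 : ∀ v : Fin (p + q) → ℝ, D * γ₀ (ι Q v) = -(γ₀ (ι Q v) * D))
    (hD2 : D * D = α • (1 : Module.End ℝ S₀))
    (Q₂ : QuadraticForm ℝ (Fin 2 → ℝ))
    (hQ₂ : ∀ x : Fin 2 → ℝ, Q₂ x = α * (x 0 ^ 2 + x 1 ^ 2)) :
    (∃! γ₂ : CliffordAlgebra Q₂ →ₐ[ℝ] Module.End ℝ S₀,
      γ₂ (ι Q₂ (Pi.single 0 1)) = D ∧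
      γ₂ (ι Q₂ (Pi.single 1 1)) = (-α) • (J * D)) ∧
    (∀ γ₂ : CliffordAlgebra Q₂ →ₐ[ℝ] Module.End ℝ S₀,
      γ₂ (ι Q₂ (Pi.single 0 1)) = D →
      γ₂ (ι Q₂ (Pi.single 1 1)) = (-α) • (J * D) →
      γ₂ (ι Q₂ (Pi.single 0 1) * ι Q₂ (Pi.single 1 1)) = J ∧
      Function.Injective γ₂ ∧
      Set.range γ₂ =
        (Submodule.span ℝ ({1, J, D, J * D} : Set (Module.End ℝ S₀)) :
          Set (Module.End ℝ S₀))) := by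
  -- scalar facts
  have hα2 : α * α = 1 := by rcases hα with ⟨_, h⟩ | ⟨_, h⟩ <;> rw [h] <;> norm_num
  have hαne : α ≠ 0 := by rcases hα with ⟨_, h⟩ | ⟨_, h⟩ <;> rw [h] <;> norm_num
  have hk4 : ∃ k : ℤ, (p:ℤ) - q = 4*k+3 := by
    rcases hα with ⟨h, _⟩ | ⟨h, _⟩
    · obtain ⟨k, hk⟩ := h.dvd; exact ⟨-2*k, by linarith⟩
    · obtain ⟨k, hk⟩ := h.dvd; exact ⟨-2*k+1, by linarith⟩
  obtain ⟨k, hk⟩ := hk4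
  have hodd : ∃ n : ℕ, p + q = 2 * n + 1 := by
    have hpar : (p + q) % 2 = 1 := by omega
    exact ⟨(p+q)/2, by omega⟩
  obtain ⟨n, hn⟩ := hodd
  have hoddexp : Odd ((p + q).choose 2 + q) := by
    have hch : (p+q).choose 2 = 2*(n*n)+n := by
      rw [hn, Nat.choose_two_right]
      have h1 : 2*n+1-1 = 2*n := by omega
      rw [h1]
      have : (2*n+1)*(2*n) = (2*(n*n)+n)*2 := by ring
      omega
    rw [hch, Nat.odd_iff]
    generalize n*n = t
    omega
  -- generators
  set m : Fin (p + q) → Module.End ℝ S₀ := fun i => γ₀ (ι Q (Pi.single i 1)) with hm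
  set ε : Fin (p + q) → ℝ := fun i => if (i : ℕ) < p then 1 else -1 with hε
  have hQs : ∀ i, Q (Pi.single i 1) = ε i := by
    intro i
    rw [hQ]
    rw [Finset.sum_eq_single i (fun b _ hb => by rw [Pi.single_eq_of_ne hb]; ring)
      (fun h => absurd (Finset.mem_univ i) h)]
    rw [Pi.single_eq_same]
    simp [hε]
  have hpolar : ∀ i j : Fin (p + q), i ≠ j →
      QuadraticMap.polar Q (Pi.single i 1) (Pi.single j 1) = 0 := by
    intro i j hij
    have hd : QuadraticMap.polar Q (Pi.single i 1) (Pi.single j 1)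
        = Q (Pi.single i 1 + Pi.single j 1) - Q (Pi.single i 1) - Q (Pi.single j 1) := rfl
    rw [hd, hQ, hQ, hQ, ← Finset.sum_sub_distrib, ← Finset.sum_sub_distrib]
    apply Finset.sum_eq_zero
    intro b _
    by_cases hbi : b = i
    · subst hbi
      rw [Pi.add_apply, Pi.single_eq_same, Pi.single_eq_of_ne hij]
      ring
    · by_cases hbj : b = j
      · subst hbj
        rw [Pi.add_apply, Pi.single_eq_same, Pi.single_eq_of_ne (Ne.symm hij)]
        ring
      · rw [Pi.add_apply, Pi.single_eq_of_ne hbi, Pi.single_eq_of_ne hbj]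
        ring
  have hmsq : ∀ i, m i * m i = ε i • 1 := by
    intro i
    have h := map_mul γ₀ (ι Q (Pi.single i 1)) (ι Q (Pi.single i 1))
    rw [ι_sq_scalar] at h
    rw [hm]
    simp only
    rw [← h, AlgHom.commutes, hQs, Algebra.algebraMap_eq_smul_one]
  have hmanti : ∀ i j : Fin (p + q), i ≠ j → m i * m j = -(m j * m i) := by
    intro i j hij
    have h1 := ι_mul_ι_add_swap (Q := Q) (Pi.single i 1) (Pi.single j 1)
    rw [hpolar i j hij, map_zero] at h1
    have h2 := congrArg γ₀ h1
    rw [map_add, map_mul, map_mul, map_zero] at h2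
    exact eq_neg_of_add_eq_zero_left h2
  have hJprod : J = ((List.finRange (p + q)).map m).prod := by
    rw [hJ, List.ofFn_eq_map, map_list_prod, List.map_map]
    rfl
  have hJ2 : J * J = -1 := by
    have h := aux_sq m ε (List.finRange (p + q)) (List.nodup_finRange _)
      (fun i _ => hmsq i) (fun i _ j _ hij => hmanti i j hij)
    rw [← hJprod] at h
    have hεprod : ((List.finRange (p + q)).map ε).prod = (-1 : ℝ) ^ q := by
      rw [← List.ofFn_eq_map, List.prod_ofFn]
      rw [Fin.prod_univ_eq_prod_range (fun i => if i < p then (1:ℝ) else -1)]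
      rw [Finset.prod_range_add]
      rw [Finset.prod_congr rfl (fun i hi => if_pos (Finset.mem_range.mp hi)),
        Finset.prod_congr rfl (fun i _ => if_neg (by omega))]
      simp
    rw [h, List.length_finRange, hεprod, ← pow_add, Odd.neg_one_pow hoddexp, neg_smul, one_smul]
  have hmD : ∀ i, m i * D = -(D * m i) := fun i => by
    rw [hD1 (Pi.single i 1), neg_neg]
  have hJD : D * J = -(J * D) := by
    have h := aux_comm m (fun _ => (-1 : ℝ)) D (List.finRange (p + q))
      (fun i _ => by rw [neg_one_smul]; exact hmD i)
    rw [← hJprod, List.map_const', List.prod_replicate, List.length_finRange, hn,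
      pow_succ, pow_mul, neg_one_sq, one_pow, one_mul, neg_one_smul] at h
    rw [h, neg_neg]
  have hJm : ∀ i, J * m i = m i * J := by
    intro i
    have h := aux_comm m (fun j => if j = i then (1 : ℝ) else -1) (m i) (List.finRange (p + q))
      (fun j _ => by
        by_cases hji : j = i
        · simp [hji]
        · simp only [if_neg hji, neg_one_smul]; exact hmanti j i hji)
    rw [← hJprod] at h
    have hsp : ((List.finRange (p + q)).map fun j => if j = i then (1 : ℝ) else -1).prod = 1 := by
      rw [← List.ofFn_eq_map, List.prod_ofFn]
      rw [← Finset.mul_prod_erase Finset.univ _ (Finset.mem_univ i), if_pos rfl, one_mul]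
      rw [Finset.prod_congr rfl (fun j hj => if_neg (Finset.ne_of_mem_erase hj))]
      rw [Finset.prod_const, Finset.card_erase_of_mem (Finset.mem_univ i), Finset.card_univ,
        Fintype.card_fin, hn]
      have h1 : 2*n+1-1 = 2*n := by omega
      rw [h1, pow_mul, neg_one_sq, one_pow]
    rw [hsp, one_smul] at h
    exact h
  -- E and products
  set E : Module.End ℝ S₀ := (-α) • (J * D) with hE
  have hDE : D * E = J := by
    rw [hE, mul_smul_comm, ← mul_assoc, hJD, neg_mul, neg_smul, smul_neg, neg_neg,
      mul_assoc, hD2, mul_smul_comm, mul_one, smul_smul, hα2, one_smul]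
  have hED : E * D = -J := by
    rw [hE, smul_mul_assoc, mul_assoc, hD2, mul_smul_comm, mul_one, smul_smul,
      neg_mul, hα2, neg_smul, one_smul]
  have hDJD : D * (J * D) = (-α) • J := by
    have h0 := hDE
    rw [hE, mul_smul_comm] at h0
    have h2 := congrArg (fun z => (-α : ℝ) • z) h0
    simp only [smul_smul, neg_mul_neg, hα2, one_smul] at h2
    exact h2
  have hE2 : E * E = α • 1 := by
    rw [hE, smul_mul_assoc, mul_smul_comm, smul_smul, neg_mul_neg, hα2, one_smul,
      mul_assoc, hDJD, mul_smul_comm, hJ2, neg_smul, smul_neg, neg_neg]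
  -- faithfulness of scalars
  have hone : ∀ r : ℝ, r • (1 : Module.End ℝ S₀) = 0 → r = 0 := by
    intro r hr
    obtain ⟨s, hs⟩ := exists_ne (0 : S₀)
    have h := LinearMap.congr_fun hr s
    simp only [LinearMap.smul_apply, Module.End.one_apply, LinearMap.zero_apply] at h
    rcases smul_eq_zero.mp h with h | h
    · exact h
    · exact absurd h hs
  have key1 : ∀ x y : ℝ, x • (1 : Module.End ℝ S₀) + y • J = 0 → x = 0 ∧ y = 0 := by
    intro x y h
    have h2 : x • J - y • (1 : Module.End ℝ S₀) = 0 := by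
      have h3 := congrArg (fun z => J * z) h
      simp only [mul_add, mul_smul_comm, hJ2, mul_one, mul_zero] at h3
      rw [← h3]
      module
    have h3 : (x*x + y*y) • (1 : Module.End ℝ S₀) = 0 := by
      have h4 : (x*x + y*y) • (1 : Module.End ℝ S₀)
          = x • (x • (1 : Module.End ℝ S₀) + y • J) - y • (x • J - y • (1 : Module.End ℝ S₀)) := by
        module
      rw [h4, h, h2, smul_zero, smul_zero, sub_zero]
    have h5 := hone _ h3
    constructor <;> nlinarith
  -- linear independence relation
  have hind : ∀ a b c e : ℝ,
      a • (1 : Module.End ℝ S₀) + b • J + c • D + e • (J * D) = 0 →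
      a = 0 ∧ b = 0 ∧ c = 0 ∧ e = 0 := by
    intro a b c e hR
    have hd0 : 0 < p + q := by omega
    set i₀ : Fin (p + q) := ⟨0, hd0⟩ with hi₀
    set M0 := m i₀ with hM0
    set ε₀ := ε i₀ with hε₀def
    have hε₀ne : ε₀ ≠ 0 := by rw [hε₀def, hε]; by_cases h : ((i₀:ℕ) < p) <;> simp [h]
    have hM0sq : M0 * M0 = ε₀ • 1 := hmsq i₀
    have e2 : M0 * J * M0 = ε₀ • J := by
      rw [show M0 * J = J * M0 from (hJm i₀).symm, mul_assoc, hM0sq, mul_smul_comm, mul_one]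
    have e3 : M0 * D * M0 = -(ε₀ • D) := by
      rw [show M0 * D = -(D * M0) from hmD i₀, neg_mul, mul_assoc, hM0sq, mul_smul_comm,
        mul_one]
    have e4 : M0 * (J * D) * M0 = -(ε₀ • (J * D)) := by
      have h0 : M0 * (J * D) * M0 = (J * (M0 * D)) * M0 := by
        rw [← mul_assoc, show M0 * J = J * M0 from (hJm i₀).symm, mul_assoc J M0 D]
      rw [h0, hmD i₀, mul_neg, neg_mul, mul_assoc, mul_assoc, hM0sq, mul_smul_comm, mul_one,
        mul_smul_comm]
    have hconj : a • (1 : Module.End ℝ S₀) + b • J - c • D - e • (J * D) = 0 := by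
      have hT : M0 * (a • (1 : Module.End ℝ S₀) + b • J + c • D + e • (J * D)) * M0
          = ε₀ • (a • (1 : Module.End ℝ S₀) + b • J - c • D - e • (J * D)) := by
        rw [mul_add, mul_add, mul_add, add_mul, add_mul, add_mul, mul_smul_comm,
          mul_smul_comm, mul_smul_comm, mul_smul_comm, smul_mul_assoc, smul_mul_assoc,
          smul_mul_assoc, smul_mul_assoc, mul_one, hM0sq, e2, e3, e4]
        module
      have h1 : ε₀ • (a • (1 : Module.End ℝ S₀) + b • J - c • D - e • (J * D)) = 0 := by
        rw [← hT, hR, mul_zero, zero_mul]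
      rcases smul_eq_zero.mp h1 with h | h
      · exact absurd h hε₀ne
      · exact h
    have hX : a • (1 : Module.End ℝ S₀) + b • J = 0 := by
      have h4 : a • (1 : Module.End ℝ S₀) + b • J =
          (1/2 : ℝ) • ((a • (1 : Module.End ℝ S₀) + b • J + c • D + e • (J * D)) +
            (a • (1 : Module.End ℝ S₀) + b • J - c • D - e • (J * D))) := by module
      rw [h4, hR, hconj, add_zero, smul_zero]
    have hY : c • D + e • (J * D) = 0 := by
      have h4 : c • D + e • (J * D) =
          (1/2 : ℝ) • ((a • (1 : Module.End ℝ S₀) + b • J + c • D + e • (J * D)) -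
            (a • (1 : Module.End ℝ S₀) + b • J - c • D - e • (J * D))) := by module
      rw [h4, hR, hconj, sub_zero, smul_zero]
    obtain ⟨ha, hb⟩ := key1 a b hX
    have h5 : (c * α) • (1 : Module.End ℝ S₀) + (e * α) • J = 0 := by
      have h6 : (c • D + e • (J * D)) * D = (c * α) • (1 : Module.End ℝ S₀) + (e * α) • J := by
        rw [add_mul, smul_mul_assoc, smul_mul_assoc, hD2, mul_assoc, hD2, mul_smul_comm,
          mul_one, smul_smul, smul_smul]
      rw [← h6, hY, zero_mul]
    obtain ⟨hc, he⟩ := key1 _ _ h5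
    exact ⟨ha, hb, by rcases mul_eq_zero.mp hc with h|h; exact h; exact absurd h hαne,
      by rcases mul_eq_zero.mp he with h|h; exact h; exact absurd h hαne⟩
  -- Q₂ facts
  have hQ₂0 : Q₂ (Pi.single 0 1) = α := by
    rw [hQ₂]
    norm_num [Pi.single_apply]
  have hQ₂1 : Q₂ (Pi.single 1 1) = α := by
    rw [hQ₂]
    norm_num [Pi.single_apply]
  have hpolar₂ : QuadraticMap.polar Q₂ (Pi.single 0 1) (Pi.single 1 1) = 0 := by
    have hd : QuadraticMap.polar Q₂ (Pi.single 0 1) (Pi.single 1 1)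
        = Q₂ (Pi.single 0 1 + Pi.single 1 1) - Q₂ (Pi.single 0 1) - Q₂ (Pi.single 1 1) := rfl
    rw [hd, hQ₂, hQ₂, hQ₂]
    norm_num [Pi.single_apply]
    ring
  set x₁ : CliffordAlgebra Q₂ := ι Q₂ (Pi.single 0 1) with hx₁def
  set x₂ : CliffordAlgebra Q₂ := ι Q₂ (Pi.single 1 1) with hx₂def
  have hx1 : x₁ * x₁ = α • 1 := by
    rw [hx₁def, ι_sq_scalar, hQ₂0, Algebra.algebraMap_eq_smul_one]
  have hx2 : x₂ * x₂ = α • 1 := by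
    rw [hx₂def, ι_sq_scalar, hQ₂1, Algebra.algebraMap_eq_smul_one]
  have hswap : x₂ * x₁ = -(x₁ * x₂) := by
    have h1 := ι_mul_ι_add_swap (Q := Q₂) (Pi.single 0 1) (Pi.single 1 1)
    rw [hpolar₂, map_zero] at h1
    exact eq_neg_of_add_eq_zero_right h1
  have hv : ∀ v : Fin 2 → ℝ, v = v 0 • (Pi.single 0 1 : Fin 2 → ℝ) + v 1 • (Pi.single 1 1 : Fin 2 → ℝ) := by
    intro v
    ext i
    fin_cases i <;> simp [Pi.single_apply]
  -- the candidate linear map and hom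
  set f₂ : (Fin 2 → ℝ) →ₗ[ℝ] Module.End ℝ S₀ :=
    { toFun := fun v => v 0 • D + v 1 • E
      map_add' := by
        intros x y
        simp only [Pi.add_apply]
        module
      map_smul' := by
        intros c x
        simp only [Pi.smul_apply, smul_eq_mul, RingHom.id_apply]
        module } with hf₂
  have hf₂cond : ∀ v : Fin 2 → ℝ, f₂ v * f₂ v = algebraMap ℝ (Module.End ℝ S₀) (Q₂ v) := by
    intro v
    rw [Algebra.algebraMap_eq_smul_one, hQ₂]
    show (v 0 • D + v 1 • E) * (v 0 • D + v 1 • E) = _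
    have expand : (v 0 • D + v 1 • E) * (v 0 • D + v 1 • E)
        = (v 0 * v 0) • (D * D) + (v 0 * v 1) • (D * E) + (v 1 * v 0) • (E * D)
          + (v 1 * v 1) • (E * E) := by
      simp only [add_mul, mul_add, smul_mul_assoc, mul_smul_comm, smul_smul]
      module
    rw [expand, hD2, hDE, hED, hE2]
    match_scalars <;> ring
  set γc : CliffordAlgebra Q₂ →ₐ[ℝ] Module.End ℝ S₀ :=
    CliffordAlgebra.lift Q₂ ⟨f₂, hf₂cond⟩ with hγc
  have heval : ∀ g : CliffordAlgebra Q₂ →ₐ[ℝ] Module.End ℝ S₀,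
      g x₁ = D → g x₂ = E → ∀ v : Fin 2 → ℝ, g (ι Q₂ v) = v 0 • D + v 1 • E := by
    intro g h1 h2 v
    conv_lhs => rw [hv v]
    rw [map_add, map_smul, map_smul, map_add, map_smul, map_smul, ← hx₁def, ← hx₂def,
      h1, h2]
  have hγc1 : γc x₁ = D := by
    rw [hγc, hx₁def, lift_ι_apply]
    show (Pi.single 0 1 : Fin 2 → ℝ) 0 • D + (Pi.single 0 1 : Fin 2 → ℝ) 1 • E = D
    norm_num [Pi.single_apply]
  have hγc2 : γc x₂ = E := by
    rw [hγc, hx₂def, lift_ι_apply]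
    show (Pi.single 1 1 : Fin 2 → ℝ) 0 • D + (Pi.single 1 1 : Fin 2 → ℝ) 1 • E = E
    norm_num [Pi.single_apply]
  -- span of Clifford algebra
  set S : Set (CliffordAlgebra Q₂) := {1, x₁, x₂, x₁ * x₂} with hS
  have m1 : (1 : CliffordAlgebra Q₂) ∈ Submodule.span ℝ S :=
    Submodule.subset_span (by rw [hS]; left; rfl)
  have mx1 : x₁ ∈ Submodule.span ℝ S :=
    Submodule.subset_span (by rw [hS]; right; left; rfl)
  have mx2 : x₂ ∈ Submodule.span ℝ S :=
    Submodule.subset_span (by rw [hS]; right; right; left; rfl)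
  have mx12 : x₁ * x₂ ∈ Submodule.span ℝ S :=
    Submodule.subset_span (by rw [hS]; right; right; right; rfl)
  have hprod : ∀ a ∈ S, ∀ b ∈ S, a * b ∈ Submodule.span ℝ S := by
    intro a ha b hb
    simp only [hS, Set.mem_insert_iff, Set.mem_singleton_iff] at ha hb
    rcases ha with rfl | rfl | rfl | rfl <;> rcases hb with rfl | rfl | rfl | rfl
    · rw [one_mul]; exact m1
    · rw [one_mul]; exact mx1
    · rw [one_mul]; exact mx2
    · rw [one_mul]; exact mx12
    · rw [mul_one]; exact mx1
    · rw [hx1]; exact Submodule.smul_mem _ _ m1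
    · exact mx12
    · rw [← mul_assoc, hx1, smul_mul_assoc, one_mul]
      exact Submodule.smul_mem _ _ mx2
    · rw [mul_one]; exact mx2
    · rw [hswap]; exact neg_mem mx12
    · rw [hx2]; exact Submodule.smul_mem _ _ m1
    · rw [← mul_assoc, hswap, neg_mul, mul_assoc, hx2, mul_smul_comm, mul_one]
      exact neg_mem (Submodule.smul_mem _ _ mx1)
    · rw [mul_one]; exact mx12
    · rw [mul_assoc, hswap, mul_neg, ← mul_assoc, hx1, smul_mul_assoc, one_mul]
      exact neg_mem (Submodule.smul_mem _ _ mx2)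
    · rw [mul_assoc, hx2, mul_smul_comm, mul_one]
      exact Submodule.smul_mem _ _ mx1
    · rw [mul_assoc, ← mul_assoc x₂ x₁ x₂, hswap, neg_mul, mul_neg, mul_assoc, hx2,
        mul_smul_comm, mul_one, mul_smul_comm, hx1]
      exact neg_mem (Submodule.smul_mem _ _ (Submodule.smul_mem _ _ m1))
  have htop : ∀ z : CliffordAlgebra Q₂, z ∈ Submodule.span ℝ S := by
    intro z
    induction z using CliffordAlgebra.induction with
    | algebraMap r =>
      rw [Algebra.algebraMap_eq_smul_one]
      exact Submodule.smul_mem _ _ m1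
    | ι v =>
      have hiv : ι Q₂ v = v 0 • x₁ + v 1 • x₂ := by
        conv_lhs => rw [hv v]
        rw [map_add, map_smul, map_smul]
      rw [hiv]
      exact add_mem (Submodule.smul_mem _ _ mx1) (Submodule.smul_mem _ _ mx2)
    | mul a b ha hb =>
      have hclosed : Submodule.span ℝ S * Submodule.span ℝ S ≤ Submodule.span ℝ S := by
        rw [Submodule.span_mul_span]
        refine Submodule.span_le.mpr ?_
        rintro z ⟨a', ha', b', hb', rfl⟩
        exact hprod a' ha' b' hb'
      exact hclosed (Submodule.mul_mem_mul ha hb)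
    | add a b ha hb => exact add_mem ha hb
  -- properties of any γ₂ with the prescribed values
  have props : ∀ γ₂ : CliffordAlgebra Q₂ →ₐ[ℝ] Module.End ℝ S₀,
      γ₂ x₁ = D → γ₂ x₂ = E →
      γ₂ (x₁ * x₂) = J ∧ Function.Injective γ₂ ∧
      Set.range γ₂ = (Submodule.span ℝ ({1, J, D, J * D} : Set (Module.End ℝ S₀)) :
        Set (Module.End ℝ S₀)) := by
    intro γ₂ h1 h2
    have hmul : γ₂ (x₁ * x₂) = J := by rw [map_mul, h1, h2, hDE]
    have hzero : ∀ z : CliffordAlgebra Q₂, γ₂ z = 0 → z = 0 := by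
      intro z hz
      have hzS := htop z
      rw [hS] at hzS
      rw [Submodule.mem_span_insert] at hzS
      obtain ⟨r1, z1, hz1, rfl⟩ := hzS
      rw [Submodule.mem_span_insert] at hz1
      obtain ⟨r2, z2, hz2, rfl⟩ := hz1
      rw [Submodule.mem_span_insert] at hz2
      obtain ⟨r3, z3, hz3, rfl⟩ := hz2
      rw [Submodule.mem_span_singleton] at hz3
      obtain ⟨r4, rfl⟩ := hz3
      simp only [map_add, map_smul, map_one, h1, h2, hmul] at hz
      have h' : r1 • (1 : Module.End ℝ S₀) + r4 • J + r2 • D + (r3 * (-α)) • (J * D) = 0 := by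
        have he' : r1 • (1 : Module.End ℝ S₀) + r4 • J + r2 • D + (r3 * (-α)) • (J * D)
            = r1 • (1 : Module.End ℝ S₀) + (r2 • D + (r3 • E + r4 • (J : Module.End ℝ S₀))) := by
          rw [hE]
          module
        rw [he', hz]
      obtain ⟨ha, hb, hc, he⟩ := hind _ _ _ _ h'
      have hr3 : r3 = 0 := by
        rcases mul_eq_zero.mp he with h | h
        · exact h
        · exact absurd h (by simpa using hαne)
      rw [ha, hb, hc, hr3]
      simp
    have hinj : Function.Injective γ₂ := by
      intro x y hxy
      have h0 : γ₂ (x - y) = 0 := by rw [map_sub, hxy, sub_self]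
      have := hzero _ h0
      exact sub_eq_zero.mp this
    refine ⟨hmul, hinj, ?_⟩
    have htop' : (⊤ : Submodule ℝ (CliffordAlgebra Q₂)) = Submodule.span ℝ S :=
      le_antisymm (fun z _ => htop z) le_top
    have himg : ⇑γ₂.toLinearMap '' S = ({1, D, E, J} : Set (Module.End ℝ S₀)) := by
      rw [hS, Set.image_insert_eq, Set.image_insert_eq, Set.image_insert_eq,
        Set.image_singleton]
      simp only [AlgHom.toLinearMap_apply, map_one, h1, h2, hmul]
    have hspan_eq : Submodule.span ℝ ({1, D, E, J} : Set (Module.End ℝ S₀))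
        = Submodule.span ℝ ({1, J, D, J * D} : Set (Module.End ℝ S₀)) := by
      apply le_antisymm
      · refine Submodule.span_le.mpr ?_
        intro w hw
        simp only [Set.mem_insert_iff, Set.mem_singleton_iff] at hw
        rcases hw with rfl | rfl | rfl | rfl
        · exact Submodule.subset_span (by simp)
        · exact Submodule.subset_span (by simp)
        · rw [hE]
          exact Submodule.smul_mem _ _ (Submodule.subset_span (by simp))
        · exact Submodule.subset_span (by simp)
      · refine Submodule.span_le.mpr ?_
        intro w hw
        simp only [Set.mem_insert_iff, Set.mem_singleton_iff] at hw
        rcases hw with rfl | rfl | rfl | rfl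
        · exact Submodule.subset_span (by simp)
        · exact Submodule.subset_span (by simp)
        · exact Submodule.subset_span (by simp)
        · have hJDE : J * D = (-α) • E := by
            rw [hE, smul_smul, neg_mul_neg, hα2, one_smul]
          rw [hJDE]
          exact Submodule.smul_mem _ _ (Submodule.subset_span (by simp))
    have hrange : Set.range ⇑γ₂ = ↑(LinearMap.range γ₂.toLinearMap) := by
      ext w
      simp [LinearMap.mem_range]
    rw [hrange, ← Submodule.map_top, htop', Submodule.map_span, himg]
    exact congrArg (fun (W : Submodule ℝ (Module.End ℝ S₀)) => (W : Set (Module.End ℝ S₀)))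
      hspan_eq
  refine ⟨⟨γc, ⟨hγc1, hγc2⟩, ?_⟩, fun γ₂ h1 h2 => props γ₂ h1 h2⟩
  intro γ' ⟨h1', h2'⟩
  apply CliffordAlgebra.hom_ext
  apply LinearMap.ext
  intro v
  show γ' (ι Q₂ v) = γc (ι Q₂ v)
  rw [heval γ' h1' h2' v, heval γc hγc1 hγc2 v]
end

section
/- Let p, q ∈ ℕ with p − q ≡ 3 or 7 (mod 8), d = p + q, α = −1 if p − q ≡ 3 (mod 8) and α = +1 if p − q ≡ 7 (mod 8). Let γ₀ : Cl_{p,q} → End_ℝ(S₀) be an elementary real pinor representation and J = γ₀(ω). Let D and D' be two invertible elements of End_ℝ(S₀), each anticommuting with γ₀(ι(v)) for all v ∈ ℝ^d and squaring to α·id, and let ε ∈ {−1, 1}. Let γ⁽²⁾ be the unique unital ℝ-algebra homomorphism Cl(Q'_α) → End_ℝ(S₀) with ι'(e₁) ↦ D and ι'(e₂) ↦ −α·(J ∘ D), and γ'⁽²⁾ the one with ι'(e₁) ↦ D' and ι'(e₂) ↦ −α·((ε·J) ∘ D'). Then γ⁽²⁾ and γ'⁽²⁾ are equivalent representations: there exists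 an invertible U ∈ End_ℝ(S₀) with γ'⁽²⁾(x) = U ∘ γ⁽²⁾(x) ∘ U⁻¹ for all x ∈ Cl(Q'_α). -/
/-!
Since `d` is odd, the volume element `ω` is odd, so `D` and `D'`, which anticommute with the
generators, anticommute with `J = γ₀ ω`, and `D' D` commutes with all of `γ₀`. By Schur's lemma
`W = 1 + α D' D` is then invertible (if it vanishes, `D' = -D` and `W = J` works instead); it
satisfies `W D = D' W` and commutes with `J`. For `ε = 1` take `U = W`, for `ε = -1` take
`U = W D`: then `U` intertwines the images of both generators of `Cl(Q'_α)`, hence all of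
`γ⁽²⁾` and `γ'⁽²⁾`.
-/

namespace CliffordAlgebra

variable {R M A : Type*} [CommRing R] [AddCommGroup M] [Module R M] {Q : QuadraticForm R M}
  [Ring A] [Algebra R A]

theorem involute_prod_ofFn_ι {n : ℕ} (v : Fin n → M) :
    involute (List.ofFn fun i => ι Q (v i)).prod =
      (-1) ^ n * (List.ofFn fun i => ι Q (v i)).prod := by
  have hmap : (List.ofFn fun i => ι Q (v i)) = (List.ofFn v).map (ι Q) := by
    rw [List.map_ofFn]; rfl
  have hneg := List.prod_map_neg ((List.ofFn v).map (ι Q))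
  rw [List.length_map, List.length_ofFn, List.map_map] at hneg
  rw [hmap, map_list_prod, List.map_map, ← hneg]
  congr 2
  ext m
  exact involute_ι m

theorem mul_map_eq_map_involute_mul {f : CliffordAlgebra Q →ₐ[R] A} {E : A}
    (hE : ∀ m, E * f (ι Q m) = -(f (ι Q m) * E)) (x : CliffordAlgebra Q) :
    E * f x = f (involute x) * E := by
  induction x using CliffordAlgebra.induction with
  | algebraMap r => simp only [AlgHom.commutes, Algebra.commutes]
  | ι m => rw [hE, involute_ι, map_neg, neg_mul]
  | mul a b ha hb => rw [map_mul, ← mul_assoc, ha, mul_assoc, hb, map_mul, map_mul, mul_assoc]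
  | add a b ha hb => rw [map_add, mul_add, ha, hb, map_add, map_add, add_mul]

/-- Each of `E`, `E'` twists `f` by the grade involution, so their product does not. -/
theorem commute_mul_map_of_anticommute {f : CliffordAlgebra Q →ₐ[R] A} {E E' : A}
    (hE : ∀ m, E * f (ι Q m) = -(f (ι Q m) * E))
    (hE' : ∀ m, E' * f (ι Q m) = -(f (ι Q m) * E')) (x : CliffordAlgebra Q) :
    Commute (E' * E) (f x) := by
  rw [Commute, SemiconjBy, mul_assoc, mul_map_eq_map_involute_mul hE, ← mul_assoc,
    mul_map_eq_map_involute_mul hE', involute_involute, mul_assoc]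

theorem map_mul_eq_mul_map_of_basis {I : Type*} (b : Module.Basis I R M)
    {f g : CliffordAlgebra Q →ₐ[R] A} {u : A}
    (h : ∀ i, f (ι Q (b i)) * u = u * g (ι Q (b i))) (x : CliffordAlgebra Q) :
    f x * u = u * g x := by
  have hι : ∀ m, f (ι Q m) * u = u * g (ι Q m) := fun m => by
    have := b.ext (f₁ := LinearMap.mulRight R u ∘ₗ f.toLinearMap ∘ₗ ι Q)
      (f₂ := LinearMap.mulLeft R u ∘ₗ g.toLinearMap ∘ₗ ι Q) h
    exact LinearMap.congr_fun this m
  induction x using CliffordAlgebra.induction with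
  | algebraMap r => simp only [AlgHom.commutes, Algebra.commutes]
  | ι m => exact hι m
  | mul a b ha hb => rw [map_mul, mul_assoc, hb, ← mul_assoc, ha, mul_assoc, map_mul]
  | add a b ha hb => rw [map_add, add_mul, ha, hb, map_add, mul_add]

end CliffordAlgebra

theorem Module.End.isUnit_of_forall_commute_of_irreducible {K V A : Type*} [Field K]
    [AddCommGroup V] [Module K V] [FiniteDimensional K V] [Semiring A] [Algebra K A]
    (ρ : A →ₐ[K] Module.End K V)
    (hirr : ∀ W : Submodule K V, (∀ x : A, ∀ w ∈ W, ρ x w ∈ W) → W = ⊥ ∨ W = ⊤)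
    {c : Module.End K V} (hc : ∀ x, Commute c (ρ x)) (hc0 : c ≠ 0) : IsUnit c := by
  rw [LinearMap.isUnit_iff_ker_eq_bot]
  refine (hirr _ fun x w hw => ?_).resolve_right fun htop => hc0 ?_
  · rw [LinearMap.mem_ker] at hw ⊢
    rw [← Module.End.mul_apply, (hc x).eq, Module.End.mul_apply, hw, map_zero]
  · exact LinearMap.ker_eq_top.mp htop

section Intertwiner

variable {R A : Type*} [CommRing R] [Ring A] [Algebra R A] {α : R} {D D' : A}

theorem one_add_smul_mul_mul_eq_add (hα : α * α = 1) (hD : D * D = α • 1) :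
    (1 + α • (D' * D)) * D = D + D' := by
  rw [add_mul, one_mul, smul_mul_assoc, mul_assoc, hD, mul_smul_comm, mul_one, smul_smul, hα,
    one_smul]

theorem mul_one_add_smul_mul_eq_add (hα : α * α = 1) (hD' : D' * D' = α • 1) :
    D' * (1 + α • (D' * D)) = D' + D := by
  rw [mul_add, mul_one, mul_smul_comm, ← mul_assoc, hD', smul_mul_assoc, one_mul, smul_smul,
    hα, one_smul]

theorem isUnit_of_mul_self_eq_smul_one (hα : α * α = 1) (hD : D * D = α • 1) : IsUnit D := by
  have h : D * (α • D) = 1 := by rw [mul_smul_comm, hD, smul_smul, hα, one_smul]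
  exact ⟨⟨D, α • D, h, by rwa [smul_mul_assoc, ← mul_smul_comm]⟩, rfl⟩

theorem exists_unit_mul_eq_mul_and_mul_eq_smul {W J : A} (hW : IsUnit W) (hWD : W * D = D' * W)
    (hWJ : Commute W J) (hD : IsUnit D) (hDJ : D * J = -(J * D)) {ε : R}
    (hε : ε = 1 ∨ ε = -1) : ∃ U : Aˣ, (U : A) * D = D' * U ∧ J * U = ε • (U * J) := by
  rcases hε with rfl | rfl
  · exact ⟨hW.unit, hWD, by rw [one_smul, hW.unit_spec, hWJ.eq]⟩
  · refine ⟨hW.unit * hD.unit, ?_, ?_⟩ <;> simp only [Units.val_mul, IsUnit.unit_spec]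
    · rw [← mul_assoc D', ← hWD]
    · rw [← mul_assoc, ← hWJ.eq, mul_assoc, mul_assoc, hDJ, neg_one_smul, mul_neg, neg_neg]

theorem smul_mul_mul_eq_mul_mul {U J : A} {ε : R} (hUD : U * D = D' * U)
    (hUJ : J * U = ε • (U * J)) (hε : ε * ε = 1) : ε • J * D' * U = U * (J * D) :=
  calc ε • J * D' * U = ε • (J * U) * D := by
        rw [smul_mul_assoc, smul_mul_assoc, smul_mul_assoc, mul_assoc, ← hUD, ← mul_assoc]
    _ = U * (J * D) := by rw [hUJ, smul_smul, hε, one_smul, mul_assoc]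

end Intertwiner

open CliffordAlgebra in
theorem exists_isUnit_mul_eq_mul_commute_of_anticommute {K V M : Type*} [Field K]
    [AddCommGroup V] [Module K V] [FiniteDimensional K V] [AddCommGroup M] [Module K M]
    {Q : QuadraticForm K M} (ρ : CliffordAlgebra Q →ₐ[K] Module.End K V)
    (hirr : ∀ W : Submodule K V,
      (∀ x : CliffordAlgebra Q, ∀ w ∈ W, ρ x w ∈ W) → W = ⊥ ∨ W = ⊤)
    {α : K} (hα : α * α = 1) {D D' : Module.End K V}
    (hD : ∀ m, D * ρ (ι Q m) = -(ρ (ι Q m) * D)) (hD' : ∀ m, D' * ρ (ι Q m) = -(ρ (ι Q m) * D'))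
    (hD2 : D * D = α • 1) (hD'2 : D' * D' = α • 1)
    {ω : CliffordAlgebra Q} (hω : involute ω = -ω) (hωu : IsUnit (ρ ω)) :
    ∃ W : Module.End K V, IsUnit W ∧ W * D = D' * W ∧ Commute W (ρ ω) := by
  have hWD := one_add_smul_mul_mul_eq_add (D' := D') hα hD2
  have hD'W := mul_one_add_smul_mul_eq_add (D := D) hα hD'2
  have hcomm : ∀ x, Commute (1 + α • (D' * D)) (ρ x) := fun x =>
    (Commute.one_left _).add_left ((commute_mul_map_of_anticommute hD hD' x).smul_left α)
  by_cases hW0 : 1 + α • (D' * D) = 0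
  · have hD'D : D' = -D := by
      rw [hW0, zero_mul] at hWD
      exact (neg_eq_of_add_eq_zero_right hWD.symm).symm
    refine ⟨ρ ω, hωu, ?_, Commute.refl _⟩
    rw [hD'D, neg_mul, mul_map_eq_map_involute_mul hD, hω, map_neg, neg_mul, neg_neg]
  · exact ⟨_, Module.End.isUnit_of_forall_commute_of_irreducible ρ hirr hcomm hW0,
      by rw [hWD, hD'W, add_comm], hcomm ω⟩

open CliffordAlgebra in
theorem gamma2_representations_equivalent_general (p q : ℕ) (α : ℝ)
    (hα : (((p : ℤ) - (q : ℤ)) ≡ 3 [ZMOD 8] ∧ α = -1) ∨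
      (((p : ℤ) - (q : ℤ)) ≡ 7 [ZMOD 8] ∧ α = 1))
    (Q : QuadraticForm ℝ (Fin (p + q) → ℝ))
    (hQ : ∀ x : Fin (p + q) → ℝ,
      Q x = ∑ i : Fin (p + q), (if (i : ℕ) < p then (1 : ℝ) else -1) * x i ^ 2)
    {S₀ : Type*} [AddCommGroup S₀] [Module ℝ S₀] [FiniteDimensional ℝ S₀]
    (γ₀ : CliffordAlgebra Q →ₐ[ℝ] Module.End ℝ S₀)
    (hsimple : ∀ W : Submodule ℝ S₀,
      (∀ x : CliffordAlgebra Q, ∀ w ∈ W, γ₀ x w ∈ W) → W = ⊥ ∨ W = ⊤)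
    (J : Module.End ℝ S₀)
    (hJ : J = γ₀ ((List.ofFn fun i : Fin (p + q) =>
      CliffordAlgebra.ι Q (Pi.single i 1)).prod))
    (D D' : Module.End ℝ S₀)
    (hD1 : ∀ v : Fin (p + q) → ℝ, D * γ₀ (ι Q v) = -(γ₀ (ι Q v) * D))
    (hD2 : D * D = α • (1 : Module.End ℝ S₀))
    (hD1' : ∀ v : Fin (p + q) → ℝ, D' * γ₀ (ι Q v) = -(γ₀ (ι Q v) * D'))
    (hD2' : D' * D' = α • (1 : Module.End ℝ S₀))
    (ε : ℝ) (hε : ε = 1 ∨ ε = -1)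
    (Q₂ : QuadraticForm ℝ (Fin 2 → ℝ))
    (γ₂ γ₂' : CliffordAlgebra Q₂ →ₐ[ℝ] Module.End ℝ S₀)
    (hγ₂a : γ₂ (ι Q₂ (Pi.single 0 1)) = D)
    (hγ₂b : γ₂ (ι Q₂ (Pi.single 1 1)) = (-α) • (J * D))
    (hγ₂a' : γ₂' (ι Q₂ (Pi.single 0 1)) = D')
    (hγ₂b' : γ₂' (ι Q₂ (Pi.single 1 1)) = (-α) • ((ε • J) * D')) :
    ∃ U : (Module.End ℝ S₀)ˣ, ∀ x : CliffordAlgebra Q₂,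
      γ₂' x = (U : Module.End ℝ S₀) * γ₂ x * ((U⁻¹ : (Module.End ℝ S₀)ˣ) : Module.End ℝ S₀) := by
  have hα2 : α * α = 1 := by rcases hα with ⟨-, rfl⟩ | ⟨-, rfl⟩ <;> norm_num
  have hodd : Odd (p + q) := by
    rw [Nat.odd_iff]
    rcases hα with ⟨h, -⟩ | ⟨h, -⟩ <;> (rw [Int.ModEq] at h; omega)
  set ω := (List.ofFn fun i : Fin (p + q) => ι Q (Pi.single i 1)).prod
  have hω : involute ω = -ω := by rw [involute_prod_ofFn_ι, hodd.neg_one_pow, neg_one_mul]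
  have hωu : IsUnit ω := List.prod_isUnit fun m hm => by
    obtain ⟨i, rfl⟩ := List.mem_ofFn.mp hm
    refine isUnit_ι_of_isUnit Q ?_
    rw [hQ, Finset.sum_eq_single i (fun j _ hj => by simp [hj]) (by simp)]
    split_ifs <;> simp
  obtain ⟨W, hWu, hWD, hWJ⟩ := exists_isUnit_mul_eq_mul_commute_of_anticommute γ₀ hsimple hα2
    hD1 hD1' hD2 hD2' hω (hωu.map γ₀)
  rw [← hJ] at hWJ
  have hDJ : D * J = -(J * D) := by
    rw [hJ, mul_map_eq_map_involute_mul hD1, hω, map_neg, neg_mul]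
  obtain ⟨U, hUD, hUJ⟩ := exists_unit_mul_eq_mul_and_mul_eq_smul hWu hWD hWJ
    (isUnit_of_mul_self_eq_smul_one hα2 hD2) hDJ hε
  refine ⟨U, fun x => ?_⟩
  rw [← map_mul_eq_mul_map_of_basis (Pi.basisFun ℝ (Fin 2)) ?_ x, Units.mul_inv_cancel_right]
  simp only [Fin.forall_fin_two, Pi.basisFun_apply, hγ₂a, hγ₂a', hγ₂b, hγ₂b']
  have hε2 : ε * ε = 1 := by rcases hε with rfl | rfl <;> norm_num
  exact ⟨hUD.symm, by rw [smul_mul_assoc, mul_smul_comm, smul_mul_mul_eq_mul_mul hUD hUJ hε2]⟩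

open CliffordAlgebra in
/-- In signature `p − q ≡ 3, 7 (mod 8)`, for two conjugations `D`, `D'` and a sign `ε`,
the representations `γ⁽²⁾` of `Cl(Q'_α)` determined by `(D, −α·(J∘D))` and
`(D', −α·((ε·J)∘D'))` are equivalent: they are conjugate by an invertible endomorphism. -/
theorem gamma2_representations_equivalent (p q : ℕ) (α : ℝ)
    (hα : (((p : ℤ) - (q : ℤ)) ≡ 3 [ZMOD 8] ∧ α = -1) ∨
      (((p : ℤ) - (q : ℤ)) ≡ 7 [ZMOD 8] ∧ α = 1))
    (Q : QuadraticForm ℝ (Fin (p + q) → ℝ))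
    (hQ : ∀ x : Fin (p + q) → ℝ,
      Q x = ∑ i : Fin (p + q), (if (i : ℕ) < p then (1 : ℝ) else -1) * x i ^ 2)
    {S₀ : Type*} [AddCommGroup S₀] [Module ℝ S₀] [Nontrivial S₀] [FiniteDimensional ℝ S₀]
    (γ₀ : CliffordAlgebra Q →ₐ[ℝ] Module.End ℝ S₀)
    (hsimple : ∀ W : Submodule ℝ S₀,
      (∀ x : CliffordAlgebra Q, ∀ w ∈ W, γ₀ x w ∈ W) → W = ⊥ ∨ W = ⊤)
    (J : Module.End ℝ S₀)
    (hJ : J = γ₀ ((List.ofFn fun i : Fin (p + q) =>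
      CliffordAlgebra.ι Q (Pi.single i 1)).prod))
    (D D' : Module.End ℝ S₀) (hDu : IsUnit D) (hDu' : IsUnit D')
    (hD1 : ∀ v : Fin (p + q) → ℝ, D * γ₀ (ι Q v) = -(γ₀ (ι Q v) * D))
    (hD2 : D * D = α • (1 : Module.End ℝ S₀))
    (hD1' : ∀ v : Fin (p + q) → ℝ, D' * γ₀ (ι Q v) = -(γ₀ (ι Q v) * D'))
    (hD2' : D' * D' = α • (1 : Module.End ℝ S₀))
    (ε : ℝ) (hε : ε = 1 ∨ ε = -1)
    (Q₂ : QuadraticForm ℝ (Fin 2 → ℝ))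
    (hQ₂ : ∀ x : Fin 2 → ℝ, Q₂ x = α * (x 0 ^ 2 + x 1 ^ 2))
    (γ₂ γ₂' : CliffordAlgebra Q₂ →ₐ[ℝ] Module.End ℝ S₀)
    (hγ₂a : γ₂ (ι Q₂ (Pi.single 0 1)) = D)
    (hγ₂b : γ₂ (ι Q₂ (Pi.single 1 1)) = (-α) • (J * D))
    (hγ₂a' : γ₂' (ι Q₂ (Pi.single 0 1)) = D')
    (hγ₂b' : γ₂' (ι Q₂ (Pi.single 1 1)) = (-α) • ((ε • J) * D')) :
    ∃ U : (Module.End ℝ S₀)ˣ, ∀ x : CliffordAlgebra Q₂,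
      γ₂' x = (U : Module.End ℝ S₀) * γ₂ x * ((U⁻¹ : (Module.End ℝ S₀)ˣ) : Module.End ℝ S₀) :=
  gamma2_representations_equivalent_general p q α hα Q hQ γ₀ hsimple J hJ D D' hD1 hD2 hD1' hD2' ε
    hε Q₂ γ₂ γ₂' hγ₂a hγ₂b hγ₂a' hγ₂b'
end

section
/- Let S₀ be a real vector space and D, J ∈ End_ℝ(S₀) with D ∘ D = id, J ∘ J = −id and J ∘ D = −D ∘ J. Set S⁺ = ker(D − id). Then the ℝ-linear map ℂ ⊗_ℝ S⁺ → S₀ sending z ⊗ x to (Re z)·x + (Im z)·J(x) is an isomorphism of real vector spaces. -/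
/-!
Since `D` is an involution and `2` is invertible, `S₀` splits as `S⁺ ⊕ S⁻` into the `±1`
eigenspaces of `D`, via `x = ½(x + Dx) + ½(x - Dx)`. Because `J` anticommutes with `D` it swaps
`S⁺` and `S⁻`, and `J² = -1` makes `J : S⁺ → S⁻` an isomorphism with inverse `-J`. Finally
`ℂ ⊗_ℝ S⁺ ≅ S⁺ × S⁺` through the basis `1, i` of `ℂ`, so the map is the composite
`ℂ ⊗_ℝ S⁺ ≅ S⁺ × S⁺ ≅ S⁺ × S⁻ ≅ S₀`.
-/

open LinearMap TensorProduct

namespace Module.End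

variable {R M : Type*} [Ring R] [AddCommGroup M] [Module R M]

theorem mem_ker_sub_one {D : Module.End R M} {x : M} : x ∈ ker (D - 1) ↔ D x = x := by
  simp [sub_eq_zero]

theorem mem_ker_add_one {D : Module.End R M} {x : M} : x ∈ ker (D + 1) ↔ D x = -x := by
  simp [add_eq_zero_iff_eq_neg]

theorem isCompl_ker_sub_one_ker_add_one [Invertible (2 : R)] {D : Module.End R M}
    (hD : D * D = 1) : IsCompl (ker (D - 1)) (ker (D + 1)) := by
  have hDD : ∀ x, D (D x) = x := fun x => congr($hD x)
  constructor
  · rw [Submodule.disjoint_def]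
    intro x hx hx'
    rw [mem_ker_sub_one] at hx
    rw [mem_ker_add_one, hx, eq_neg_iff_add_eq_zero, ← two_smul R] at hx'
    simpa using congr(⅟(2 : R) • $hx')
  · rw [codisjoint_iff, eq_top_iff]
    intro x _
    refine Submodule.mem_sup.2 ⟨⅟(2 : R) • (x + D x), ?_, ⅟(2 : R) • (x - D x), ?_, ?_⟩
    · simp [hDD, add_comm]
    · simp [hDD]
    · rw [← smul_add, add_add_sub_cancel, ← two_smul R x, smul_smul, invOf_mul_self, one_smul]

variable {D J : Module.End R M}

theorem mapsTo_ker_sub_one_ker_add_one (hJD : J * D = -(D * J)) {x : M}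
    (hx : x ∈ ker (D - 1)) : J x ∈ ker (D + 1) := by
  rw [mem_ker_sub_one] at hx
  rw [mem_ker_add_one, ← mul_apply, ← neg_eq_iff_eq_neg, ← LinearMap.neg_apply, ← hJD,
    mul_apply, hx]

theorem mapsTo_ker_add_one_ker_sub_one (hJD : J * D = -(D * J)) {x : M}
    (hx : x ∈ ker (D + 1)) : J x ∈ ker (D - 1) := by
  rw [mem_ker_add_one] at hx
  rw [mem_ker_sub_one, ← mul_apply, ← neg_neg (D * J), ← hJD, LinearMap.neg_apply, mul_apply,
    hx, map_neg, neg_neg]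

def kerSubOneEquivKerAddOne (hJ : J * J = -1) (hJD : J * D = -(D * J)) :
    ker (D - 1) ≃ₗ[R] ker (D + 1) where
  toFun x := ⟨J x, mapsTo_ker_sub_one_ker_add_one hJD x.2⟩
  invFun y := ⟨-J y, neg_mem (mapsTo_ker_add_one_ker_sub_one hJD y.2)⟩
  map_add' x y := by ext; simp
  map_smul' c x := by ext; simp
  left_inv x := by ext; simpa using congr(-$hJ x)
  right_inv y := by ext; simpa using congr(-$hJ y)

@[simp]
theorem coe_kerSubOneEquivKerAddOne_apply (hJ : J * J = -1) (hJD : J * D = -(D * J))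
    (x : ker (D - 1)) : (kerSubOneEquivKerAddOne hJ hJD x : M) = J x :=
  rfl

end Module.End

namespace Complex

variable (M : Type*) [AddCommGroup M] [Module ℝ M]

noncomputable def tensorEquivProd : ℂ ⊗[ℝ] M ≃ₗ[ℝ] M × M :=
  equivRealProdLm.rTensor M ≪≫ₗ prodLeft ℝ ℝ ℝ ℝ M ≪≫ₗ
    (TensorProduct.lid ℝ M).prodCongr (TensorProduct.lid ℝ M)

@[simp]
theorem tensorEquivProd_tmul (z : ℂ) (x : M) :
    tensorEquivProd M (z ⊗ₜ x) = (z.re • x, z.im • x) :=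
  rfl

end Complex

open TensorProduct in
/-- If `D² = id`, `J² = −id` and `J∘D = −D∘J`, then with `S⁺ = ker(D − id)` the map
`ℂ ⊗_ℝ S⁺ → S₀`, `z ⊗ x ↦ (Re z)·x + (Im z)·J(x)`, is an isomorphism of real vector
spaces. -/
theorem twisted_complexification_iso
    {S₀ : Type*} [AddCommGroup S₀] [Module ℝ S₀]
    (D J : Module.End ℝ S₀) (hD : D * D = 1) (hJ : J * J = -1)
    (hJD : J * D = -(D * J)) :
    ∃ f : ℂ ⊗[ℝ] ↥(LinearMap.ker (D - 1)) →ₗ[ℝ] S₀,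
      (∀ (z : ℂ) (x : LinearMap.ker (D - 1)),
        f (z ⊗ₜ x) = z.re • (x : S₀) + z.im • J (x : S₀)) ∧
      Function.Bijective f := by
  let e := Complex.tensorEquivProd _ ≪≫ₗ
    (LinearEquiv.refl ℝ _).prodCongr (Module.End.kerSubOneEquivKerAddOne hJ hJD) ≪≫ₗ
    Submodule.prodEquivOfIsCompl _ _ (Module.End.isCompl_ker_sub_one_ker_add_one hD)
  exact ⟨e.toLinearMap, fun z x => by simp [e], e.bijective⟩
end
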